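/- arXiv:1101.5790 — 8 statements merged into one kernel-verified Lean document; each statement's English description precedes it below -/
import Mathlib

section
/- Let H ∈ (1/2, 1) and α, β ∈ (0,1) with α + β < 2H. Then for all T > 0, the double integral ∫₀ᵀ ∫₀ᵀ s^(−β) r^(−α) |s−r|^(2H−2) dr ds is finite. -/
/-!
Split the square along the diagonal and swap the variables on the upper half, so that both
halves are integrals of `s ^ c * r ^ p * (s - r) ^ q` over the triangle `0 < r < s < T`.
The substitution `r = s u` turns the inner integral into `s ^ (c + p + q + 1)` times a Beta
integral, which is finite for `p, q > -1`; the outer integral is then finite exactly when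
`c + p + q > -2`, which for `c = -β`, `p = -α`, `q = 2H - 2` is `α + β < 2H`.
-/

open MeasureTheory Set

open scoped ENNReal

lemma lintegral_Ioo_rpow_lt_top {p T : ℝ} (hp : -1 < p) (hT : 0 < T) :
    ∫⁻ x in Ioo 0 T, ENNReal.ofReal (x ^ p) < ∞ :=
  ((intervalIntegral.integrableOn_Ioo_rpow_iff hT).2 hp).lintegral_lt_top

lemma lintegral_Ioo_rpow_mul_one_sub_rpow_lt_top {p q : ℝ} (hp : -1 < p) (hq : -1 < q) :
    ∫⁻ u in Ioo 0 1, ENNReal.ofReal (u ^ p * (1 - u) ^ q) < ∞ := by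
  have hB := ProbabilityTheory.beta_pos (by linarith : 0 < p + 1) (by linarith : 0 < q + 1)
  have h := ProbabilityTheory.lintegral_betaPDF_eq_one (by linarith : 0 < p + 1)
    (by linarith : 0 < q + 1)
  simp only [ProbabilityTheory.lintegral_betaPDF, add_sub_cancel_right, mul_assoc] at h
  rw [lintegral_congr fun u => ENNReal.ofReal_mul (by positivity),
    lintegral_const_mul' _ _ ENNReal.ofReal_ne_top] at h
  exact ENNReal.lt_top_of_mul_ne_top_right (h ▸ ENNReal.one_ne_top)
    (ENNReal.ofReal_pos.2 (by positivity)).ne'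

lemma lintegral_Ioo_rpow_mul_sub_rpow (p q : ℝ) {s : ℝ} (hs : 0 < s) :
    ∫⁻ r in Ioo 0 s, ENNReal.ofReal (r ^ p * (s - r) ^ q)
      = ENNReal.ofReal (s ^ (p + q + 1))
        * ∫⁻ u in Ioo 0 1, ENNReal.ofReal (u ^ p * (1 - u) ^ q) := by
  have himage : (s * ·) '' Ioo 0 1 = Ioo 0 s := by
    simpa using image_mul_left_Ioo hs (0 : ℝ) 1
  rw [← himage, lintegral_image_eq_lintegral_abs_deriv_mul measurableSet_Ioo
      (fun u _ => (hasDerivAt_const_mul s).hasDerivWithinAt) (mul_right_injective₀ hs.ne').injOn,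
    ← lintegral_const_mul' _ _ ENNReal.ofReal_ne_top]
  refine setLIntegral_congr_fun measurableSet_Ioo fun u hu => ?_
  rw [abs_of_pos hs, ← ENNReal.ofReal_mul hs.le, ← ENNReal.ofReal_mul (by positivity)]
  congr 1
  rw [show s - s * u = s * (1 - u) by ring, Real.mul_rpow hs.le hu.1.le,
    Real.mul_rpow hs.le (sub_pos.2 hu.2).le, Real.rpow_add hs, Real.rpow_add hs, Real.rpow_one]
  ring

noncomputable def triangleKernel (c p q s : ℝ) : ℝ → ℝ≥0∞ :=
  (Iic s).indicator fun r => ENNReal.ofReal (s ^ c * (r ^ p * (s - r) ^ q))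

lemma measurable_triangleKernel (c p q : ℝ) :
    Measurable fun z : ℝ × ℝ => triangleKernel c p q z.1 z.2 := by
  simp only [triangleKernel, indicator_apply, mem_Iic]
  exact Measurable.ite (measurableSet_le measurable_snd measurable_fst) (by fun_prop)
    measurable_const

lemma lintegral_triangleKernel {c p q s T : ℝ} (hs : 0 < s) (hsT : s < T) :
    ∫⁻ r in Ioo 0 T, triangleKernel c p q s r
      = ENNReal.ofReal (s ^ (c + p + q + 1))
        * ∫⁻ u in Ioo 0 1, ENNReal.ofReal (u ^ p * (1 - u) ^ q) := by
  have hcut : Iic s ∩ Ioo 0 T = Ioc 0 s :=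
    Set.ext fun r => ⟨fun h => ⟨h.2.1, h.1⟩, fun h => ⟨h.2, h.1, h.2.trans_lt hsT⟩⟩
  rw [triangleKernel, setLIntegral_indicator measurableSet_Iic, hcut,
    ← setLIntegral_congr Ioo_ae_eq_Ioc,
    lintegral_congr fun r => ENNReal.ofReal_mul (Real.rpow_nonneg hs.le c),
    lintegral_const_mul' _ _ ENNReal.ofReal_ne_top, lintegral_Ioo_rpow_mul_sub_rpow p q hs,
    ← mul_assoc, ← ENNReal.ofReal_mul (Real.rpow_nonneg hs.le c), ← Real.rpow_add hs,
    ← add_assoc, ← add_assoc]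

lemma lintegral_lintegral_triangleKernel_lt_top {c p q T : ℝ} (hp : -1 < p) (hq : -1 < q)
    (hcpq : -2 < c + p + q) (hT : 0 < T) :
    ∫⁻ s in Ioo 0 T, ∫⁻ r in Ioo 0 T, triangleKernel c p q s r < ∞ := by
  rw [setLIntegral_congr_fun measurableSet_Ioo fun s hs => lintegral_triangleKernel hs.1 hs.2,
    lintegral_mul_const' _ _ (lintegral_Ioo_rpow_mul_one_sub_rpow_lt_top hp hq).ne]
  exact ENNReal.mul_lt_top (lintegral_Ioo_rpow_lt_top (by linarith) hT)
    (lintegral_Ioo_rpow_mul_one_sub_rpow_lt_top hp hq)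

lemma ofReal_rpow_mul_rpow_mul_abs_sub_rpow_le (a b γ s r : ℝ) :
    ENNReal.ofReal (s ^ (-b) * r ^ (-a) * |s - r| ^ γ)
      ≤ triangleKernel (-b) (-a) γ s r + triangleKernel (-a) (-b) γ r s := by
  rcases le_total r s with hrs | hsr
  · refine le_add_right (le_of_eq ?_)
    rw [triangleKernel, indicator_of_mem (mem_Iic.2 hrs), abs_of_nonneg (sub_nonneg.2 hrs),
      mul_assoc]
  · refine le_add_left (le_of_eq ?_)
    rw [triangleKernel, indicator_of_mem (mem_Iic.2 hsr), abs_sub_comm,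
      abs_of_nonneg (sub_nonneg.2 hsr)]
    ring_nf

theorem stmt0_general (H α β T : ℝ) (hH : 1/2 < H)
    (hα : α ∈ Set.Ioo (0:ℝ) 1) (hβ : β ∈ Set.Ioo (0:ℝ) 1)
    (hαβ : α + β < 2*H) (hT : 0 < T) :
    (∫⁻ s in Set.Ioo (0:ℝ) T, ∫⁻ r in Set.Ioo (0:ℝ) T,
      ENNReal.ofReal (s ^ (-β) * r ^ (-α) * |s - r| ^ (2*H - 2))) < ⊤ := by
  set I := Ioo (0 : ℝ) T
  set K₁ := triangleKernel (-β) (-α) (2 * H - 2)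
  set K₂ := triangleKernel (-α) (-β) (2 * H - 2)
  have hK₁ := measurable_triangleKernel (-β) (-α) (2 * H - 2)
  have hK₂ := measurable_triangleKernel (-α) (-β) (2 * H - 2)
  have hswap : ∫⁻ s in I, ∫⁻ r in I, K₂ r s = ∫⁻ r in I, ∫⁻ s in I, K₂ r s :=
    lintegral_lintegral_swap (hK₂.comp measurable_swap).aemeasurable
  calc (∫⁻ s in I, ∫⁻ r in I, ENNReal.ofReal (s ^ (-β) * r ^ (-α) * |s - r| ^ (2*H - 2)))
      ≤ ∫⁻ s in I, ∫⁻ r in I, (K₁ s r + K₂ r s) :=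
        lintegral_mono fun s => lintegral_mono fun r =>
          ofReal_rpow_mul_rpow_mul_abs_sub_rpow_le α β _ s r
    _ = (∫⁻ s in I, ∫⁻ r in I, K₁ s r) + ∫⁻ r in I, ∫⁻ s in I, K₂ r s := by
        rw [← hswap, ← lintegral_add_left hK₁.lintegral_prod_right']
        exact lintegral_congr fun s =>
          lintegral_add_left (hK₁.comp (measurable_const.prodMk measurable_id)) _
    _ < ⊤ := ENNReal.add_lt_top.2
        ⟨lintegral_lintegral_triangleKernel_lt_top (by linarith [hα.2]) (by linarith)
          (by linarith) hT,
        lintegral_lintegral_triangleKernel_lt_top (by linarith [hβ.2]) (by linarith)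
          (by linarith) hT⟩

theorem stmt0 (H α β T : ℝ) (hH : 1/2 < H) (hH1 : H < 1)
    (hα : α ∈ Set.Ioo (0:ℝ) 1) (hβ : β ∈ Set.Ioo (0:ℝ) 1)
    (hαβ : α + β < 2*H) (hT : 0 < T) :
    (∫⁻ s in Set.Ioo (0:ℝ) T, ∫⁻ r in Set.Ioo (0:ℝ) T,
      ENNReal.ofReal (s ^ (-β) * r ^ (-α) * |s - r| ^ (2*H - 2))) < ⊤ :=
  stmt0_general H α β T hH hα hβ hαβ hT
end

section
/- Let H ∈ (1/2,1) and α ∈ (2H−1, 1). Then there exists a constant c > 0 such that for all 0 ≤ s ≤ t ≤ T, ∫ₛᵗ (T−u)^(α−1) ∫₀ᵘ (T−v)^(−α) (u−v)^(2H−2) dv du ≤ c (t−s)^(2H−1). -/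
/-!
Substituting `w = u - v` and writing `K = T - u`, `β = 2H - 1`, the inner integral is at most
`∫_0^∞ (K + w)^(-α) w^(β-1) dw`. Bounding `(K + w)^(-α)` by `K^(-α)` for `w ≤ K` and by `w^(-α)`
for `w > K` gives `(1/β + 1/(α - β)) K^(β-α)`; the second piece is finite because `α > β`.
The outer integrand is then at most a constant times `(T - u)^(β-1)`, whose integral over `(s, t)`
is `((T - s)^β - (T - t)^β)/β ≤ (t - s)^β/β` by subadditivity of `x ↦ x^β` for `β ≤ 1`.
-/

open MeasureTheory Set

theorem setIntegral_Ioo_comp_sub_left (f : ℝ → ℝ) {a b : ℝ} (hab : a ≤ b) (c : ℝ) :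
    ∫ x in Ioo a b, f (c - x) = ∫ x in Ioo (c - b) (c - a), f x := by
  rw [← integral_Ioc_eq_integral_Ioo, ← integral_Ioc_eq_integral_Ioo,
    ← intervalIntegral.integral_of_le hab, ← intervalIntegral.integral_of_le (by linarith),
    intervalIntegral.integral_comp_sub_left]

section RpowSubOne

variable {β a b : ℝ}

theorem integrableOn_Ioc_rpow_sub_one (hβ : 0 < β) (hab : a ≤ b) :
    IntegrableOn (fun w : ℝ ↦ w ^ (β - 1)) (Ioc a b) :=
  (intervalIntegrable_iff_integrableOn_Ioc_of_le hab).1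
    (intervalIntegral.intervalIntegrable_rpow' (by linarith))

theorem integral_Ioc_rpow_sub_one (hβ : 0 < β) (hab : a ≤ b) :
    ∫ w in Ioc a b, w ^ (β - 1) = (b ^ β - a ^ β) / β := by
  rw [← intervalIntegral.integral_of_le hab, integral_rpow (Or.inl (by linarith)),
    sub_add_cancel]

theorem integral_Ioo_sub_rpow_sub_one_le {T s t : ℝ} (hβ0 : 0 < β) (hβ1 : β ≤ 1) (hst : s ≤ t)
    (htT : t ≤ T) :
    ∫ u in Ioo s t, (T - u) ^ (β - 1) ≤ (t - s) ^ β / β := by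
  have hsub : (T - s) ^ β ≤ (T - t) ^ β + (t - s) ^ β := by
    simpa using Real.rpow_add_le_add_rpow (sub_nonneg.2 htT) (sub_nonneg.2 hst) hβ0.le hβ1
  rw [setIntegral_Ioo_comp_sub_left (· ^ (β - 1)) hst, ← integral_Ioc_eq_integral_Ioo,
    integral_Ioc_rpow_sub_one hβ0 (by linarith)]
  gcongr
  linarith

theorem integrableOn_Ioo_sub_rpow_sub_one {T s t : ℝ} (hβ : 0 < β) (hst : s ≤ t) :
    IntegrableOn (fun u : ℝ ↦ (T - u) ^ (β - 1)) (Ioo s t) := by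
  have h := (intervalIntegral.intervalIntegrable_rpow' (r := β - 1) (a := T - t) (b := T - s)
    (by linarith)).comp_sub_left T
  rw [sub_sub_cancel, sub_sub_cancel] at h
  exact (intervalIntegrable_iff_integrableOn_Ioo_of_le hst).1 h.symm

end RpowSubOne

section Kernel

variable {α β K w : ℝ}

theorem add_rpow_neg_mul_rpow_le_left (hα : 0 ≤ α) (hK : 0 < K) (hw : 0 ≤ w) :
    (K + w) ^ (-α) * w ^ (β - 1) ≤ K ^ (-α) * w ^ (β - 1) := by
  have : 0 ≤ w ^ (β - 1) := by positivity
  exact mul_le_mul_of_nonneg_right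
    (Real.rpow_le_rpow_of_nonpos hK (le_add_of_nonneg_right hw) (neg_nonpos.2 hα)) this

theorem add_rpow_neg_mul_rpow_le_right (hα : 0 ≤ α) (hK : 0 ≤ K) (hw : 0 < w) :
    (K + w) ^ (-α) * w ^ (β - 1) ≤ w ^ (β - α - 1) := by
  calc (K + w) ^ (-α) * w ^ (β - 1) ≤ w ^ (-α) * w ^ (β - 1) :=
        mul_le_mul_of_nonneg_right
          (Real.rpow_le_rpow_of_nonpos hw (le_add_of_nonneg_left hK) (neg_nonpos.2 hα))
          (by positivity)
    _ = w ^ (β - α - 1) := by rw [← Real.rpow_add hw]; ring_nf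

theorem add_rpow_neg_mul_rpow_nonneg (hK : 0 ≤ K) (hw : 0 ≤ w) :
    0 ≤ (K + w) ^ (-α) * w ^ (β - 1) := by
  have : 0 ≤ K + w := by linarith
  positivity

theorem measurable_add_rpow_neg_mul_rpow :
    Measurable fun w : ℝ ↦ (K + w) ^ (-α) * w ^ (β - 1) := by
  fun_prop

theorem integrableOn_Ioc_add_rpow_neg_mul_rpow (hα : 0 ≤ α) (hβ : 0 < β) (hK : 0 < K) :
    IntegrableOn (fun w ↦ (K + w) ^ (-α) * w ^ (β - 1)) (Ioc 0 K) :=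
  ((integrableOn_Ioc_rpow_sub_one hβ hK.le).const_mul (K ^ (-α))).mono'
    measurable_add_rpow_neg_mul_rpow.aestronglyMeasurable
    ((ae_restrict_iff' measurableSet_Ioc).2 (ae_of_all _ fun _ hw ↦ by
      rw [Real.norm_of_nonneg (add_rpow_neg_mul_rpow_nonneg hK.le hw.1.le)]
      exact add_rpow_neg_mul_rpow_le_left hα hK hw.1.le))

theorem integrableOn_Ioi_add_rpow_neg_mul_rpow_of_lt (hα : 0 ≤ α) (hβα : β < α) (hK : 0 < K) :
    IntegrableOn (fun w ↦ (K + w) ^ (-α) * w ^ (β - 1)) (Ioi K) :=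
  (integrableOn_Ioi_rpow_of_lt (by linarith : β - α - 1 < -1) hK).mono'
    measurable_add_rpow_neg_mul_rpow.aestronglyMeasurable
    ((ae_restrict_iff' measurableSet_Ioi).2 (ae_of_all _ fun w hw ↦ by
      have hw : 0 < w := hK.trans hw
      rw [Real.norm_of_nonneg (add_rpow_neg_mul_rpow_nonneg hK.le hw.le)]
      exact add_rpow_neg_mul_rpow_le_right hα hK.le hw))

theorem integrableOn_Ioi_add_rpow_neg_mul_rpow (hβ : 0 < β) (hβα : β < α) (hK : 0 < K) :
    IntegrableOn (fun w ↦ (K + w) ^ (-α) * w ^ (β - 1)) (Ioi 0) := by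
  rw [← Ioc_union_Ioi_eq_Ioi hK.le]
  exact (integrableOn_Ioc_add_rpow_neg_mul_rpow (by linarith) hβ hK).union
    (integrableOn_Ioi_add_rpow_neg_mul_rpow_of_lt (by linarith) hβα hK)

theorem integral_Ioi_add_rpow_neg_mul_rpow_le (hβ : 0 < β) (hβα : β < α) (hK : 0 < K) :
    ∫ w in Ioi 0, (K + w) ^ (-α) * w ^ (β - 1) ≤ (1 / β + 1 / (α - β)) * K ^ (β - α) := by
  have hα : 0 ≤ α := by linarith
  have hnear : ∫ w in Ioc 0 K, (K + w) ^ (-α) * w ^ (β - 1) ≤ K ^ (-α) * (K ^ β / β) := by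
    refine (setIntegral_mono_on (integrableOn_Ioc_add_rpow_neg_mul_rpow hα hβ hK)
      ((integrableOn_Ioc_rpow_sub_one hβ hK.le).const_mul _) measurableSet_Ioc
      fun w hw ↦ add_rpow_neg_mul_rpow_le_left hα hK hw.1.le).trans_eq ?_
    rw [integral_const_mul, integral_Ioc_rpow_sub_one hβ hK.le, Real.zero_rpow hβ.ne', sub_zero]
  have hfar : ∫ w in Ioi K, (K + w) ^ (-α) * w ^ (β - 1) ≤ K ^ (β - α) / (α - β) := by
    refine (setIntegral_mono_on (integrableOn_Ioi_add_rpow_neg_mul_rpow_of_lt hα hβα hK)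
      (integrableOn_Ioi_rpow_of_lt (by linarith : β - α - 1 < -1) hK) measurableSet_Ioi
      fun w hw ↦ add_rpow_neg_mul_rpow_le_right hα hK.le (hK.trans hw)).trans_eq ?_
    rw [integral_Ioi_rpow_of_lt (by linarith) hK, sub_add_cancel, neg_div, ← div_neg, neg_sub]
  rw [← Ioc_union_Ioi_eq_Ioi hK.le, setIntegral_union Ioc_disjoint_Ioi_same measurableSet_Ioi
    (integrableOn_Ioc_add_rpow_neg_mul_rpow hα hβ hK)
    (integrableOn_Ioi_add_rpow_neg_mul_rpow_of_lt hα hβα hK)]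
  calc _ ≤ K ^ (-α) * (K ^ β / β) + K ^ (β - α) / (α - β) := add_le_add hnear hfar
    _ = (1 / β + 1 / (α - β)) * K ^ (β - α) := by
      rw [sub_eq_neg_add β α, Real.rpow_add hK]
      ring

end Kernel

theorem integral_Ioo_sub_rpow_neg_mul_sub_rpow_le {α β T u : ℝ} (hβ : 0 < β) (hβα : β < α)
    (hu : 0 ≤ u) (huT : u < T) :
    ∫ v in Ioo 0 u, (T - v) ^ (-α) * (u - v) ^ (β - 1) ≤
      (1 / β + 1 / (α - β)) * (T - u) ^ (β - α) := by
  have hK : 0 < T - u := sub_pos.2 huT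
  have hsubst : ∫ v in Ioo 0 u, (T - v) ^ (-α) * (u - v) ^ (β - 1) =
      ∫ w in Ioo 0 u, (T - u + w) ^ (-α) * w ^ (β - 1) := by
    simpa using setIntegral_Ioo_comp_sub_left (fun w ↦ (T - u + w) ^ (-α) * w ^ (β - 1)) hu u
  rw [hsubst]
  refine le_trans (setIntegral_mono_set (integrableOn_Ioi_add_rpow_neg_mul_rpow hβ hβα hK)
    ((ae_restrict_iff' measurableSet_Ioi).2 (ae_of_all _ fun w hw ↦
      add_rpow_neg_mul_rpow_nonneg hK.le (le_of_lt hw)))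
    Ioo_subset_Ioi_self.eventuallyLE) ?_
  exact integral_Ioi_add_rpow_neg_mul_rpow_le hβ hβα hK

theorem sub_rpow_mul_integral_Ioo_sub_rpow_neg_mul_sub_rpow_nonneg {α β T u : ℝ} (huT : u ≤ T) :
    0 ≤ (T - u) ^ (α - 1) * ∫ v in Ioo 0 u, (T - v) ^ (-α) * (u - v) ^ (β - 1) :=
  mul_nonneg (Real.rpow_nonneg (sub_nonneg.2 huT) _) (setIntegral_nonneg measurableSet_Ioo
    fun _ hv ↦ mul_nonneg (Real.rpow_nonneg (by linarith [hv.2]) _)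
      (Real.rpow_nonneg (by linarith [hv.2]) _))

theorem sub_rpow_mul_integral_Ioo_sub_rpow_neg_mul_sub_rpow_le {α β T u : ℝ} (hβ : 0 < β)
    (hβα : β < α) (hu : 0 ≤ u) (huT : u < T) :
    (T - u) ^ (α - 1) * ∫ v in Ioo 0 u, (T - v) ^ (-α) * (u - v) ^ (β - 1) ≤
      (1 / β + 1 / (α - β)) * (T - u) ^ (β - 1) := by
  have hK : 0 < T - u := sub_pos.2 huT
  calc _ ≤ (T - u) ^ (α - 1) * ((1 / β + 1 / (α - β)) * (T - u) ^ (β - α)) := by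
        gcongr
        exact integral_Ioo_sub_rpow_neg_mul_sub_rpow_le hβ hβα hu huT
    _ = (1 / β + 1 / (α - β)) * (T - u) ^ (β - 1) := by
        rw [mul_left_comm, ← Real.rpow_add hK]
        ring_nf

theorem stmt7_general (H α T : ℝ) (hH : 1/2 < H) (hH1 : H < 1)
    (hα : α ∈ Set.Ioo (2*H - 1) 1) :
    ∃ c : ℝ, 0 < c ∧ ∀ s t : ℝ, 0 ≤ s → s ≤ t → t ≤ T →
      (∫ u in Set.Ioo s t, (T - u) ^ (α - 1) *
        ∫ v in Set.Ioo 0 u, (T - v) ^ (-α) * (u - v) ^ (2*H - 2))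
        ≤ c * (t - s) ^ (2*H - 1) := by
  rw [show 2*H - 2 = 2*H - 1 - 1 by ring]
  set β := 2*H - 1
  have hβ : 0 < β := by linarith
  have hβα : β < α := hα.1
  set C := 1 / β + 1 / (α - β)
  have hC : 0 < C := by have := sub_pos.2 hβα; positivity
  refine ⟨C / β, by positivity, fun s t hs hst htT ↦ ?_⟩
  calc _ ≤ ∫ u in Ioo s t, C * (T - u) ^ (β - 1) :=
        integral_mono_of_nonneg ((ae_restrict_iff' measurableSet_Ioo).2 (ae_of_all _
            fun u hu ↦ sub_rpow_mul_integral_Ioo_sub_rpow_neg_mul_sub_rpow_nonneg (by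
              linarith [hu.2])))
          ((integrableOn_Ioo_sub_rpow_sub_one hβ hst).const_mul C)
          ((ae_restrict_iff' measurableSet_Ioo).2 (ae_of_all _ fun u hu ↦
            sub_rpow_mul_integral_Ioo_sub_rpow_neg_mul_sub_rpow_le hβ hβα (by linarith [hu.1])
              (by linarith [hu.2])))
    _ ≤ C * ((t - s) ^ β / β) := by
        rw [integral_const_mul]
        gcongr
        exact integral_Ioo_sub_rpow_sub_one_le hβ (by linarith) hst htT
    _ = C / β * (t - s) ^ β := by ring

theorem stmt7 (H α T : ℝ) (hH : 1/2 < H) (hH1 : H < 1)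
    (hα : α ∈ Set.Ioo (2*H - 1) 1) (hT : 0 < T) :
    ∃ c : ℝ, 0 < c ∧ ∀ s t : ℝ, 0 ≤ s → s ≤ t → t ≤ T →
      (∫ u in Set.Ioo s t, (T - u) ^ (α - 1) *
        ∫ v in Set.Ioo 0 u, (T - v) ^ (-α) * (u - v) ^ (2*H - 2))
        ≤ c * (t - s) ^ (2*H - 1) :=
  stmt7_general H α T hH hH1 hα
end

section
/- Let H ∈ (1/2,1) and α ∈ (0, 2H−1). Then there exists a constant c > 0 such that for all 0 ≤ s ≤ t ≤ T, ∫ₛᵗ (T−u)^(α−1) ∫₀ᵘ (T−v)^(−α) (u−v)^(2H−2) dv du ≤ c (t−s)^α. -/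
/-!
For `v < u ≤ T` we have `(T - v) ^ (-α) ≤ (u - v) ^ (-α)`, so the inner integral is at
most `∫₀ᵘ (u - v) ^ (β - 1) dv = u ^ β / β ≤ T ^ β / β` with `β = 2H - 1 - α > 0`.
What remains is `∫ₛᵗ (T - u) ^ (α - 1) du = ((T - s) ^ α - (T - t) ^ α) / α`, which is at
most `(t - s) ^ α / α` because `x ↦ x ^ α` is subadditive for `α ≤ 1`.
-/

open MeasureTheory Set

namespace Real

lemma integrableOn_Ioo_sub_rpow {r : ℝ} (hr : -1 < r) (c a b : ℝ) :
    IntegrableOn (fun v => (c - v) ^ r) (Ioo a b) := by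
  have h :=
    (intervalIntegral.intervalIntegrable_rpow' hr (a := c - a) (b := c - b)).comp_sub_left c
  simp only [sub_sub_cancel] at h
  exact h.def'.mono_set (Ioo_subset_Ioc_self.trans Ioc_subset_uIoc)

lemma integral_Ioo_sub_rpow {r c a b : ℝ} (hr : -1 < r) (hab : a ≤ b) :
    ∫ v in Ioo a b, (c - v) ^ r = ((c - a) ^ (r + 1) - (c - b) ^ (r + 1)) / (r + 1) := by
  rw [← integral_Ioc_eq_integral_Ioo, ← intervalIntegral.integral_of_le hab,
    intervalIntegral.integral_comp_sub_left (fun x => x ^ r), integral_rpow (Or.inl hr)]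

lemma sub_rpow_sub_sub_rpow_le {p c s t : ℝ} (hp : 0 ≤ p) (hp1 : p ≤ 1) (hst : s ≤ t)
    (htc : t ≤ c) : (c - s) ^ p - (c - t) ^ p ≤ (t - s) ^ p := by
  have h := rpow_add_le_add_rpow (sub_nonneg.2 htc) (sub_nonneg.2 hst) hp hp1
  rw [sub_add_sub_cancel] at h
  linarith

lemma integral_Ioo_sub_rpow_mul_sub_rpow_le {α r u T : ℝ} (hα : 0 ≤ α) (hr : -1 < r - α)
    (hu : 0 ≤ u) (huT : u ≤ T) :
    ∫ v in Ioo 0 u, (T - v) ^ (-α) * (u - v) ^ r ≤ u ^ (r - α + 1) / (r - α + 1) := by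
  have hpointwise : ∀ v ∈ Ioo 0 u, (T - v) ^ (-α) * (u - v) ^ r ≤ (u - v) ^ (r - α) := by
    intro v hv
    have huv : 0 < u - v := sub_pos.2 hv.2
    calc (T - v) ^ (-α) * (u - v) ^ r ≤ (u - v) ^ (-α) * (u - v) ^ r :=
          mul_le_mul_of_nonneg_right (rpow_le_rpow_of_nonpos huv (by linarith) (neg_nonpos.2 hα))
            (rpow_nonneg huv.le r)
      _ = (u - v) ^ (r - α) := by rw [← rpow_add huv, neg_add_eq_sub]
  calc ∫ v in Ioo 0 u, (T - v) ^ (-α) * (u - v) ^ r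
      ≤ ∫ v in Ioo 0 u, (u - v) ^ (r - α) := by
        refine integral_mono_of_nonneg ?_ (integrableOn_Ioo_sub_rpow hr u 0 u) ?_
        · filter_upwards [ae_restrict_mem measurableSet_Ioo] with v hv
          exact mul_nonneg (rpow_nonneg (by linarith [hv.2]) _)
            (rpow_nonneg (by linarith [hv.2]) _)
        · filter_upwards [ae_restrict_mem measurableSet_Ioo] with v hv
          exact hpointwise v hv
    _ = u ^ (r - α + 1) / (r - α + 1) := by
        rw [integral_Ioo_sub_rpow hr hu, sub_zero, sub_self, zero_rpow (by linarith),
          sub_zero]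

lemma integral_Ioo_sub_rpow_mul_le {α C s t T : ℝ} {F : ℝ → ℝ} (hα : 0 < α)
    (hα1 : α ≤ 1) (hst : s ≤ t) (htT : t ≤ T) (hC : 0 ≤ C)
    (hF0 : ∀ u ∈ Ioo s t, 0 ≤ F u) (hFC : ∀ u ∈ Ioo s t, F u ≤ C) :
    ∫ u in Ioo s t, (T - u) ^ (α - 1) * F u ≤ C / α * (t - s) ^ α := by
  calc ∫ u in Ioo s t, (T - u) ^ (α - 1) * F u
      ≤ ∫ u in Ioo s t, (T - u) ^ (α - 1) * C := by
        refine integral_mono_of_nonneg ?_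
          ((integrableOn_Ioo_sub_rpow (by linarith) T s t).mul_const C) ?_
        · filter_upwards [ae_restrict_mem measurableSet_Ioo] with u hu
          exact mul_nonneg (rpow_nonneg (by linarith [hu.2]) _) (hF0 u hu)
        · filter_upwards [ae_restrict_mem measurableSet_Ioo] with u hu
          exact mul_le_mul_of_nonneg_left (hFC u hu) (rpow_nonneg (by linarith [hu.2]) _)
    _ = C / α * ((T - s) ^ α - (T - t) ^ α) := by
        rw [integral_mul_const, integral_Ioo_sub_rpow (by linarith) hst, sub_add_cancel]
        ring
    _ ≤ C / α * (t - s) ^ α := by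
        gcongr
        exact sub_rpow_sub_sub_rpow_le hα.le hα1 hst htT

end Real

theorem stmt8_general (H α T : ℝ) (hH1 : H < 1)
    (hα : α ∈ Set.Ioo (0:ℝ) (2*H - 1)) (hT : 0 < T) :
    ∃ c : ℝ, 0 < c ∧ ∀ s t : ℝ, 0 ≤ s → s ≤ t → t ≤ T →
      (∫ u in Set.Ioo s t, (T - u) ^ (α - 1) *
        ∫ v in Set.Ioo 0 u, (T - v) ^ (-α) * (u - v) ^ (2*H - 2))
        ≤ c * (t - s) ^ α := by
  obtain ⟨hα0, hαH⟩ := hα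
  have hβ : 0 < 2*H - 2 - α + 1 := by linarith
  refine ⟨T ^ (2*H - 2 - α + 1) / (2*H - 2 - α + 1) / α, by positivity,
    fun s t hs hst htT => ?_⟩
  refine Real.integral_Ioo_sub_rpow_mul_le hα0 (by linarith) hst htT (by positivity)
    (fun u hu => ?_) (fun u hu => ?_)
  all_goals have hu0 : 0 ≤ u := hs.trans hu.1.le
  all_goals have huT : u ≤ T := hu.2.le.trans htT
  · refine setIntegral_nonneg measurableSet_Ioo fun v hv => ?_
    exact mul_nonneg (Real.rpow_nonneg (by linarith [hv.2]) _)
      (Real.rpow_nonneg (by linarith [hv.2]) _)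
  · calc _ ≤ u ^ (2*H - 2 - α + 1) / (2*H - 2 - α + 1) :=
          Real.integral_Ioo_sub_rpow_mul_sub_rpow_le hα0.le (by linarith) hu0 huT
      _ ≤ T ^ (2*H - 2 - α + 1) / (2*H - 2 - α + 1) := by gcongr

theorem stmt8 (H α T : ℝ) (hH : 1/2 < H) (hH1 : H < 1)
    (hα : α ∈ Set.Ioo (0:ℝ) (2*H - 1)) (hT : 0 < T) :
    ∃ c : ℝ, 0 < c ∧ ∀ s t : ℝ, 0 ≤ s → s ≤ t → t ≤ T →
      (∫ u in Set.Ioo s t, (T - u) ^ (α - 1) *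
        ∫ v in Set.Ioo 0 u, (T - v) ^ (-α) * (u - v) ^ (2*H - 2))
        ≤ c * (t - s) ^ α :=
  stmt8_general H α T hH1 hα hT
end

section
/- Let H ∈ (1/2,1), α ∈ (0, 1−H), and T > 0. Then lim_{t→T⁻} (T−t)^(2−2H−2α) ∫₀ᵗ ∫₀ᵗ (T−s)^(α−1) (T−u)^(α−1) |s−u|^(2H−2) du ds = β(2−α−2H, 2H−1)/(1−H−α). -/
open MeasureTheory Set Filter
open scoped ENNReal Topology

/-!
Substituting `s = T - (T - t) x`, `u = T - (T - t) y` and using that the kernel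
`x ^ a * y ^ a * |x - y| ^ b` is homogeneous of degree `2a + b` turns the normalized integral into
the integral of that kernel over `(1, T / (T - t))²`, which increases to its integral over
`(1, ∞)²`. By symmetry the latter is twice the integral over `1 < y < x`; substituting `y = x u`
and integrating out `x > 1 / u` first leaves a Beta integral.
-/

theorem integrableOn_rpow_mul_one_sub_rpow {p q : ℝ} (hp : -1 < p) (hq : -1 < q) :
    IntegrableOn (fun x : ℝ => x ^ p * (1 - x) ^ q) (Ioo 0 1) := by
  have h := Complex.betaIntegral_convergent (u := p + 1) (v := q + 1)
    (by simp; linarith) (by simp; linarith)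
  rw [intervalIntegrable_iff_integrableOn_Ioo_of_le zero_le_one] at h
  refine IntegrableOn.congr_fun (Integrable.norm h) (fun x hx => ?_) measurableSet_Ioo
  have hx' : (1 : ℂ) - x = ((1 - x : ℝ) : ℂ) := by push_cast; rfl
  rw [norm_mul, hx', Complex.norm_cpow_eq_rpow_re_of_pos hx.1,
    Complex.norm_cpow_eq_rpow_re_of_pos (sub_pos.2 hx.2)]
  simp

section Region

variable {α β : Type*} [MeasurableSpace α] [MeasurableSpace β] {μ : Measure α} {ν : Measure β}
  {f : α → β → ℝ≥0∞} {A : Set α} {B : α → Set β}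

theorem setLIntegral_setLIntegral_eq_lintegral_lintegral_indicator (hA : MeasurableSet A)
    (hS : MeasurableSet {p : α × β | p.1 ∈ A ∧ p.2 ∈ B p.1}) :
    ∫⁻ x in A, ∫⁻ y in B x, f x y ∂ν ∂μ = ∫⁻ x, ∫⁻ y,
      {p : α × β | p.1 ∈ A ∧ p.2 ∈ B p.1}.indicator (Function.uncurry f) (x, y) ∂ν ∂μ := by
  rw [← lintegral_indicator hA]
  refine lintegral_congr fun x => ?_
  by_cases hx : x ∈ A
  · have hB : MeasurableSet (B x) := by
      simpa [hx] using hS.preimage (measurable_prodMk_left (x := x))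
    rw [indicator_of_mem hx, ← lintegral_indicator hB]
    congr 1 with y
    by_cases hy : y ∈ B x <;> simp [hx, hy]
  · simp [hx]

theorem setLIntegral_prod_eq_setLIntegral_setLIntegral [SFinite ν]
    (hf : Measurable (Function.uncurry f)) (hA : MeasurableSet A)
    (hS : MeasurableSet {p : α × β | p.1 ∈ A ∧ p.2 ∈ B p.1}) :
    ∫⁻ z in {p : α × β | p.1 ∈ A ∧ p.2 ∈ B p.1}, f z.1 z.2 ∂μ.prod ν =
      ∫⁻ x in A, ∫⁻ y in B x, f x y ∂ν ∂μ := by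
  rw [setLIntegral_setLIntegral_eq_lintegral_lintegral_indicator hA hS, ← lintegral_indicator hS]
  exact lintegral_prod _ (hf.indicator hS).aemeasurable

theorem setLIntegral_setLIntegral_swap [SFinite μ] [SFinite ν]
    (hf : Measurable (Function.uncurry f)) {C : Set β} {D : β → Set α} (hA : MeasurableSet A)
    (hC : MeasurableSet C) (hS : MeasurableSet {p : α × β | p.1 ∈ A ∧ p.2 ∈ B p.1})
    (hABCD : ∀ x y, x ∈ A ∧ y ∈ B x ↔ y ∈ C ∧ x ∈ D y) :
    ∫⁻ x in A, ∫⁻ y in B x, f x y ∂ν ∂μ = ∫⁻ y in C, ∫⁻ x in D y, f x y ∂μ ∂ν := by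
  have hS' : {p : β × α | p.1 ∈ C ∧ p.2 ∈ D p.1} = Prod.swap ⁻¹' {p | p.1 ∈ A ∧ p.2 ∈ B p.1} := by
    ext p; exact (hABCD p.2 p.1).symm
  rw [setLIntegral_setLIntegral_eq_lintegral_lintegral_indicator hA hS,
    setLIntegral_setLIntegral_eq_lintegral_lintegral_indicator hC
      (hS'.symm ▸ hS.preimage measurable_swap),
    lintegral_lintegral_swap (f := fun x y => {p : α × β | p.1 ∈ A ∧ p.2 ∈ B p.1}.indicator
      (Function.uncurry f) (x, y)) (hf.indicator hS).aemeasurable, hS']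
  rfl

end Region

theorem setLIntegral_Ioi_prod_Ioi_eq_two_mul {f : ℝ → ℝ → ℝ≥0∞}
    (hf : Measurable (Function.uncurry f)) (hsymm : ∀ x y, f x y = f y x) (c : ℝ) :
    ∫⁻ z in Ioi c ×ˢ Ioi c, f z.1 z.2 ∂volume = 2 * ∫⁻ x in Ioi c, ∫⁻ y in Ioo c x, f x y := by
  have hlower : MeasurableSet {p : ℝ × ℝ | p.1 ∈ Ioi c ∧ p.2 ∈ Ioo c p.1} :=
    (measurableSet_lt measurable_const measurable_fst).inter
      ((measurableSet_lt measurable_const measurable_snd).inter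
        (measurableSet_lt measurable_snd measurable_fst))
  have hupper : MeasurableSet {p : ℝ × ℝ | p.1 ∈ Ioi c ∧ p.2 ∈ Ici p.1} :=
    (measurableSet_lt measurable_const measurable_fst).inter
      (measurableSet_le measurable_fst measurable_snd)
  have hsplit : Ioi c ×ˢ Ioi c =
      {p : ℝ × ℝ | p.1 ∈ Ioi c ∧ p.2 ∈ Ioo c p.1} ∪ {p | p.1 ∈ Ioi c ∧ p.2 ∈ Ici p.1} := by
    ext ⟨x, y⟩
    simp only [mem_prod, mem_union, mem_ofPred_eq, mem_Ioi, mem_Ioo, mem_Ici]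
    constructor
    · rintro ⟨hx, hy⟩
      rcases lt_or_ge y x with h | h
      exacts [Or.inl ⟨hx, hy, h⟩, Or.inr ⟨hx, h⟩]
    · rintro (⟨hx, hy, -⟩ | ⟨hx, h⟩)
      exacts [⟨hx, hy⟩, ⟨hx, hx.trans_le h⟩]
  have hdisj : Disjoint {p : ℝ × ℝ | p.1 ∈ Ioi c ∧ p.2 ∈ Ioo c p.1}
      {p | p.1 ∈ Ioi c ∧ p.2 ∈ Ici p.1} :=
    disjoint_left.2 fun p h h' => (not_le.2 h.2.2) h'.2
  rw [Measure.volume_eq_prod, hsplit, lintegral_union hupper hdisj,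
    setLIntegral_prod_eq_setLIntegral_setLIntegral hf measurableSet_Ioi hlower,
    setLIntegral_prod_eq_setLIntegral_setLIntegral hf measurableSet_Ioi hupper,
    setLIntegral_setLIntegral_swap hf measurableSet_Ioi measurableSet_Ioi hupper
      (C := Ioi c) (D := fun y => Ioc c y)
      (fun x y => ⟨fun h => ⟨mem_Ioi.2 (h.1.trans_le h.2), h.1, h.2⟩, fun h => ⟨h.2.1, h.2.2⟩⟩),
    two_mul]
  congr 1
  refine setLIntegral_congr_fun measurableSet_Ioi fun y _ => ?_
  rw [setLIntegral_congr Ioo_ae_eq_Ioc.symm]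
  simp_rw [hsymm _ y]

theorem setLIntegral_Ioo_eq_mul_setLIntegral_comp_mul {c : ℝ} (hc : 0 < c) {g : ℝ → ℝ≥0∞}
    (hg : Measurable g) (l r : ℝ) :
    ∫⁻ y in Ioo l r, g y = ENNReal.ofReal c * ∫⁻ u in Ioo (l / c) (r / c), g (c * u) := by
  rw [← preimage_const_mul_Ioo₀ l r hc,
    ← setLIntegral_map measurableSet_Ioo hg (measurable_const_mul c),
    Real.map_volume_mul_left hc.ne', Measure.restrict_smul, lintegral_smul_measure, smul_eq_mul,
    ← mul_assoc, abs_of_pos (inv_pos.2 hc), ← ENNReal.ofReal_mul hc.le, mul_inv_cancel₀ hc.ne',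
    ENNReal.ofReal_one, one_mul]

theorem lintegral_Ioi_rpow_of_lt {p c : ℝ} (hp : p < -1) (hc : 0 < c) :
    ∫⁻ x in Ioi c, ENNReal.ofReal (x ^ p) = ENNReal.ofReal (-c ^ (p + 1) / (p + 1)) := by
  rw [← integral_Ioi_rpow_of_lt hp hc, ofReal_integral_eq_lintegral_ofReal
    (integrableOn_Ioi_rpow_of_lt hp hc)]
  filter_upwards [ae_restrict_mem measurableSet_Ioi] with x hx
  exact Real.rpow_nonneg (hc.trans hx).le p

noncomputable def powKernel (a b x y : ℝ) : ℝ := x ^ a * y ^ a * |x - y| ^ b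

section PowKernel

variable {a b : ℝ}

theorem powKernel_comm (x y : ℝ) : powKernel a b x y = powKernel a b y x := by
  rw [powKernel, powKernel, abs_sub_comm, mul_comm (x ^ a)]

theorem powKernel_nonneg {x y : ℝ} (hx : 0 ≤ x) (hy : 0 ≤ y) : 0 ≤ powKernel a b x y := by
  unfold powKernel; positivity

theorem powKernel_mul_mul {c x y : ℝ} (hc : 0 < c) (hx : 0 ≤ x) (hy : 0 ≤ y) :
    powKernel a b (c * x) (c * y) = c ^ (2 * a + b) * powKernel a b x y := by
  rw [powKernel, powKernel, ← mul_sub, abs_mul, abs_of_pos hc, Real.mul_rpow hc.le hx,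
    Real.mul_rpow hc.le hy, Real.mul_rpow hc.le (abs_nonneg _), Real.rpow_add hc, two_mul,
    Real.rpow_add hc]
  ring

theorem powKernel_one_left {u : ℝ} (hu : u < 1) :
    powKernel a b 1 u = u ^ a * (1 - u) ^ b := by
  rw [powKernel, Real.one_rpow, one_mul, abs_of_pos (sub_pos.2 hu)]

@[fun_prop]
theorem measurable_powKernel : Measurable (Function.uncurry (powKernel a b)) := by
  unfold powKernel; fun_prop

theorem setLIntegral_Ioo_one_powKernel {x : ℝ} (hx : 1 < x) :
    ∫⁻ y in Ioo 1 x, ENNReal.ofReal (powKernel a b x y) =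
      ∫⁻ u in Ioo x⁻¹ 1,
        ENNReal.ofReal (x ^ (2 * a + b + 1)) * ENNReal.ofReal (u ^ a * (1 - u) ^ b) := by
  have hx0 : 0 < x := one_pos.trans hx
  rw [setLIntegral_Ioo_eq_mul_setLIntegral_comp_mul hx0 (by fun_prop), one_div, div_self hx0.ne',
    ← lintegral_const_mul' _ _ ENNReal.ofReal_ne_top]
  refine setLIntegral_congr_fun measurableSet_Ioo fun u hu => ?_
  have hu0 : 0 < u := (inv_pos.2 hx0).trans hu.1
  have hscale : powKernel a b x (x * u) = x ^ (2 * a + b) * (u ^ a * (1 - u) ^ b) := by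
    simpa [powKernel_one_left hu.2] using powKernel_mul_mul (a := a) (b := b) hx0 zero_le_one hu0.le
  rw [hscale, ← ENNReal.ofReal_mul hx0.le, ← ENNReal.ofReal_mul (by positivity), ← mul_assoc,
    Real.rpow_add_one hx0.ne', mul_comm x]

theorem setLIntegral_Ioi_one_setLIntegral_Ioo_powKernel (hb : -1 < b) (hab : a + b + 1 < 0)
    (h2ab : 2 * a + b + 2 < 0) :
    ∫⁻ x in Ioi 1, ∫⁻ y in Ioo 1 x, ENNReal.ofReal (powKernel a b x y) =
      ENNReal.ofReal ((∫ u in Ioo 0 1, u ^ (-(a + b + 2)) * (1 - u) ^ b) / -(2 * a + b + 2)) := by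
  have hswap : ∀ x u : ℝ, x ∈ Ioi 1 ∧ u ∈ Ioo x⁻¹ 1 ↔ u ∈ Ioo 0 1 ∧ x ∈ Ioi u⁻¹ := by
    refine fun x u => ⟨fun ⟨hx, hxu, hu⟩ => ?_, fun ⟨⟨hu0, hu⟩, hux⟩ => ?_⟩
    · have hu0 : 0 < u := (inv_pos.2 (one_pos.trans hx)).trans hxu
      exact ⟨⟨hu0, hu⟩, (inv_lt_comm₀ (one_pos.trans hx) hu0).1 hxu⟩
    · have hx : 1 < x := (one_lt_inv₀ hu0).2 hu |>.trans hux
      exact ⟨hx, (inv_lt_comm₀ (one_pos.trans hx) hu0).2 hux, hu⟩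
  have hregion : MeasurableSet {p : ℝ × ℝ | p.1 ∈ Ioi 1 ∧ p.2 ∈ Ioo p.1⁻¹ 1} :=
    (measurableSet_lt measurable_const measurable_fst).inter
      ((measurableSet_lt (by fun_prop) measurable_snd).inter
        (measurableSet_lt measurable_snd measurable_const))
  have hbeta : IntegrableOn (fun u : ℝ => u ^ (-(a + b + 2)) * (1 - u) ^ b) (Ioo 0 1) :=
    integrableOn_rpow_mul_one_sub_rpow (by linarith) hb
  calc ∫⁻ x in Ioi 1, ∫⁻ y in Ioo 1 x, ENNReal.ofReal (powKernel a b x y)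
      = ∫⁻ x in Ioi 1, ∫⁻ u in Ioo x⁻¹ 1,
          ENNReal.ofReal (x ^ (2 * a + b + 1)) * ENNReal.ofReal (u ^ a * (1 - u) ^ b) :=
        setLIntegral_congr_fun measurableSet_Ioi fun x hx => setLIntegral_Ioo_one_powKernel hx
    _ = ∫⁻ u in Ioo 0 1, ∫⁻ x in Ioi u⁻¹,
          ENNReal.ofReal (x ^ (2 * a + b + 1)) * ENNReal.ofReal (u ^ a * (1 - u) ^ b) :=
        setLIntegral_setLIntegral_swap (by fun_prop) measurableSet_Ioi measurableSet_Ioo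
          hregion hswap
    _ = ∫⁻ u in Ioo 0 1,
          ENNReal.ofReal (u ^ (-(a + b + 2)) * (1 - u) ^ b / -(2 * a + b + 2)) := by
        refine setLIntegral_congr_fun measurableSet_Ioo fun u ⟨hu0, hu⟩ => ?_
        rw [lintegral_mul_const' _ _ ENNReal.ofReal_ne_top,
          lintegral_Ioi_rpow_of_lt (by linarith) (inv_pos.2 hu0),
          show 2 * a + b + 1 + 1 = 2 * a + b + 2 by ring, Real.inv_rpow hu0.le,
          ← Real.rpow_neg hu0.le,
          ← ENNReal.ofReal_mul (div_nonneg_of_nonpos (by simp; positivity) h2ab.le),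
          show -(a + b + 2) = -(2 * a + b + 2) + a by ring, Real.rpow_add hu0, div_neg]
        congr 1
        ring
    _ = _ := by
        rw [← integral_div, ofReal_integral_eq_lintegral_ofReal (hbeta.div_const _)]
        filter_upwards [ae_restrict_mem measurableSet_Ioo] with u ⟨hu0, hu⟩
        have : 0 < 1 - u := sub_pos.2 hu
        exact div_nonneg (by positivity) (by linarith)

theorem setLIntegral_Ioi_prod_Ioi_powKernel (hb : -1 < b) (hab : a + b + 1 < 0)
    (h2ab : 2 * a + b + 2 < 0) :
    ∫⁻ z in Ioi 1 ×ˢ Ioi 1, ENNReal.ofReal (powKernel a b z.1 z.2) =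
      ENNReal.ofReal
        (2 * (∫ u in Ioo 0 1, u ^ (-(a + b + 2)) * (1 - u) ^ b) / -(2 * a + b + 2)) := by
  rw [setLIntegral_Ioi_prod_Ioi_eq_two_mul (f := fun x y => ENNReal.ofReal (powKernel a b x y))
      (by fun_prop) (fun x y => by rw [powKernel_comm]),
    setLIntegral_Ioi_one_setLIntegral_Ioo_powKernel hb hab h2ab, mul_div_assoc,
    ENNReal.ofReal_mul zero_le_two, ENNReal.ofReal_ofNat]

theorem powKernel_nonneg_ae :
    0 ≤ᵐ[volume.restrict (Ioi 1 ×ˢ Ioi 1)] fun z : ℝ × ℝ => powKernel a b z.1 z.2 :=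
  ae_restrict_of_forall_mem (measurableSet_Ioi.prod measurableSet_Ioi) fun _ hz =>
    powKernel_nonneg (zero_le_one.trans hz.1.le) (zero_le_one.trans hz.2.le)

theorem integrableOn_Ioi_prod_Ioi_powKernel (hb : -1 < b) (hab : a + b + 1 < 0)
    (h2ab : 2 * a + b + 2 < 0) :
    IntegrableOn (fun z : ℝ × ℝ => powKernel a b z.1 z.2) (Ioi 1 ×ˢ Ioi 1) := by
  refine ⟨by fun_prop, ?_⟩
  rw [hasFiniteIntegral_iff_ofReal powKernel_nonneg_ae,
    setLIntegral_Ioi_prod_Ioi_powKernel hb hab h2ab]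
  exact ENNReal.ofReal_lt_top

theorem setIntegral_Ioi_prod_Ioi_powKernel (hb : -1 < b) (hab : a + b + 1 < 0)
    (h2ab : 2 * a + b + 2 < 0) :
    ∫ z in Ioi 1 ×ˢ Ioi 1, powKernel a b z.1 z.2 =
      2 * (∫ u in Ioo 0 1, u ^ (-(a + b + 2)) * (1 - u) ^ b) / -(2 * a + b + 2) := by
  rw [integral_eq_lintegral_of_nonneg_ae powKernel_nonneg_ae (by fun_prop),
    setLIntegral_Ioi_prod_Ioi_powKernel hb hab h2ab, ENNReal.toReal_ofReal]
  refine div_nonneg (mul_nonneg zero_le_two (setIntegral_nonneg measurableSet_Ioo ?_)) (by linarith)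
  rintro u ⟨hu0, hu⟩
  have : 0 < 1 - u := sub_pos.2 hu
  positivity

end PowKernel

theorem tendsto_setIntegral_Ioo_prod_Ioo_atTop {E : Type*} [NormedAddCommGroup E]
    [NormedSpace ℝ E] {f : ℝ × ℝ → E} {c : ℝ} (hf : IntegrableOn f (Ioi c ×ˢ Ioi c)) :
    Tendsto (fun r => ∫ x in Ioo c r, ∫ y in Ioo c r, f (x, y)) atTop
      (𝓝 (∫ z in Ioi c ×ˢ Ioi c, f z)) := by
  have hunion : ⋃ r : ℝ, Ioo c r ×ˢ Ioo c r = Ioi c ×ˢ Ioi c := by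
    ext ⟨x, y⟩
    simp only [mem_iUnion, mem_prod, mem_Ioo, mem_Ioi]
    exact ⟨fun ⟨r, ⟨hx, _⟩, hy, _⟩ => ⟨hx, hy⟩, fun ⟨hx, hy⟩ =>
      ⟨max x y + 1, ⟨hx, by linarith [le_max_left x y]⟩, hy, by linarith [le_max_right x y]⟩⟩
  have hmono : Monotone fun r : ℝ => Ioo c r ×ˢ Ioo c r :=
    fun r r' h => prod_mono (Ioo_subset_Ioo_right h) (Ioo_subset_Ioo_right h)
  have h := tendsto_setIntegral_of_monotone (fun r => measurableSet_Ioo.prod measurableSet_Ioo)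
    hmono (hunion ▸ hf)
  rw [hunion] at h
  refine h.congr fun r => ?_
  rw [Measure.volume_eq_prod, setIntegral_prod _
    (hf.mono_set (prod_mono Ioo_subset_Ioi_self Ioo_subset_Ioi_self))]

theorem setIntegral_Ioo_zero_eq_smul_setIntegral_Ioo_one {E : Type*} [NormedAddCommGroup E]
    [NormedSpace ℝ E] {T t : ℝ} (ht : 0 < t) (htT : t < T) (F : ℝ → E) :
    ∫ u in Ioo 0 t, F u = (T - t) • ∫ y in Ioo 1 (T / (T - t)), F (T - (T - t) * y) := by
  have hc : 0 < T - t := sub_pos.2 htT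
  have hr : 1 ≤ T / (T - t) := (one_le_div hc).2 (by linarith)
  rw [← integral_Ioc_eq_integral_Ioo, ← intervalIntegral.integral_of_le ht.le,
    ← integral_Ioc_eq_integral_Ioo, ← intervalIntegral.integral_of_le hr,
    intervalIntegral.integral_comp_sub_mul F hc.ne', smul_inv_smul₀ hc.ne',
    mul_div_cancel₀ _ hc.ne', sub_self, mul_one, sub_sub_cancel]

theorem rpow_mul_setIntegral_Ioo_sq_eq_setIntegral_powKernel {a b e T t : ℝ}
    (he : e + 2 * a + b + 2 = 0) (ht : 0 < t) (htT : t < T) :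
    (T - t) ^ e * ∫ s in Ioo 0 t, ∫ u in Ioo 0 t, (T - s) ^ a * (T - u) ^ a * |s - u| ^ b =
      ∫ x in Ioo 1 (T / (T - t)), ∫ y in Ioo 1 (T / (T - t)), powKernel a b x y := by
  have hc : 0 < T - t := sub_pos.2 htT
  have hscale : ∀ x ∈ Ioo 1 (T / (T - t)), ∀ y ∈ Ioo 1 (T / (T - t)),
      (T - (T - (T - t) * x)) ^ a * (T - (T - (T - t) * y)) ^ a *
        |(T - (T - t) * x) - (T - (T - t) * y)| ^ b =
      (T - t) ^ (2 * a + b) * powKernel a b x y := fun x hx y hy => by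
    rw [sub_sub_cancel, sub_sub_cancel, sub_sub_sub_cancel_left, abs_sub_comm,
      ← powKernel_mul_mul hc (zero_le_one.trans hx.1.le) (zero_le_one.trans hy.1.le), powKernel]
  simp_rw [setIntegral_Ioo_zero_eq_smul_setIntegral_Ioo_one ht htT, smul_eq_mul]
  rw [setIntegral_congr_fun measurableSet_Ioo fun x hx => by
    rw [setIntegral_congr_fun measurableSet_Ioo (hscale x hx), integral_const_mul]]
  rw [integral_const_mul, integral_const_mul, ← mul_assoc, ← mul_assoc, ← mul_assoc,
    ← Real.rpow_add_one hc.ne', ← Real.rpow_add_one hc.ne', ← Real.rpow_add hc,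
    show e + 1 + 1 + (2 * a + b) = 0 by linarith, Real.rpow_zero, one_mul]

theorem stmt10 (H α T : ℝ) (hH : 1/2 < H) (hH1 : H < 1)
    (hα : α ∈ Set.Ioo (0:ℝ) (1 - H)) (hT : 0 < T) :
    Filter.Tendsto (fun t : ℝ =>
      (T - t) ^ (2 - 2*H - 2*α) * ∫ s in Set.Ioo (0:ℝ) t, ∫ u in Set.Ioo (0:ℝ) t,
        (T - s) ^ (α - 1) * (T - u) ^ (α - 1) * |s - u| ^ (2*H - 2))
      (nhdsWithin T (Set.Iio T))
      (nhds ((∫ x in Set.Ioo (0:ℝ) 1,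
        x ^ (2 - α - 2*H - 1) * (1 - x) ^ (2*H - 1 - 1)) / (1 - H - α))) := by
  have hb : -1 < 2 * H - 2 := by linarith
  have hab : α - 1 + (2 * H - 2) + 1 < 0 := by linarith [hα.2]
  have h2ab : 2 * (α - 1) + (2 * H - 2) + 2 < 0 := by linarith [hα.2]
  have hr : Tendsto (fun t => T / (T - t)) (𝓝[<] T) atTop := by
    have hcont : Tendsto (fun t => T - t) (𝓝[<] T) (𝓝 0) := by
      simpa using ((continuous_sub_left T).tendsto T).mono_left nhdsWithin_le_nhds
    have h0 : Tendsto (fun t => T - t) (𝓝[<] T) (𝓝[>] 0) :=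
      tendsto_nhdsWithin_iff.2
        ⟨hcont, eventually_nhdsWithin_of_forall fun _ ht => mem_Ioi.2 (sub_pos.2 ht)⟩
    simpa [div_eq_mul_inv] using (tendsto_inv_nhdsGT_zero.comp h0).const_mul_atTop hT
  have hlim := (tendsto_setIntegral_Ioo_prod_Ioo_atTop
    (integrableOn_Ioi_prod_Ioi_powKernel hb hab h2ab)).comp hr
  have hvalue : 2 * (∫ u in Ioo 0 1, u ^ (-(α - 1 + (2 * H - 2) + 2)) * (1 - u) ^ (2 * H - 2)) /
        -(2 * (α - 1) + (2 * H - 2) + 2) =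
      (∫ x in Ioo 0 1, x ^ (2 - α - 2 * H - 1) * (1 - x) ^ (2 * H - 1 - 1)) / (1 - H - α) := by
    rw [show -(2 * (α - 1) + (2 * H - 2) + 2) = 2 * (1 - H - α) by ring,
      mul_div_mul_left _ _ two_ne_zero]
    congr 2 with x
    ring_nf
  rw [setIntegral_Ioi_prod_Ioi_powKernel hb hab h2ab, hvalue] at hlim
  refine hlim.congr' ?_
  filter_upwards [self_mem_nhdsWithin, Ioo_mem_nhdsLT hT] with t htT ht
  exact (rpow_mul_setIntegral_Ioo_sq_eq_setIntegral_powKernel (by ring) ht.1 htT).symm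
end

section
/- Let H ∈ (1/2,1), α ∈ (0,H), and T > 0. Then ∫₀ᵀ ∫₀ᵀ (T−u)^(−α) (T−v)^(−α) |v−u|^(2H−2) dv du = (T^(2H−2α)/(H−α)) β(1−α, 2H−1), where β is the Beta function. -/
/-!
Reflecting `u ↦ T - u`, `v ↦ T - v` turns the integrand into `u^(-α) v^(-α) |u - v|^(2H-2)`,
which is symmetric, so the integral is twice the integral over the triangle `v < u`. There the
substitution `v = u x` makes the inner integral `u^(2H-1-2α) β(1-α, 2H-1)`, and integrating in `u`
gives `T^(2H-2α) / (2H-2α)`. The computation runs through lower Lebesgue integrals of the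
nonnegative integrand, where Tonelli needs no integrability hypotheses; finiteness comes out at
the end.
-/

open MeasureTheory Set Function
open scoped ENNReal

theorem lintegral_lintegral_eq_two_mul_of_symm {μ : Measure ℝ} [SFinite μ]
    [NullSingletonClass μ] {G : ℝ → ℝ → ℝ≥0∞} (hG : Measurable (uncurry G))
    (hsymm : ∀ u v, G u v = G v u) :
    ∫⁻ u, ∫⁻ v, G u v ∂μ ∂μ = 2 * ∫⁻ u, ∫⁻ v in Iio u, G u v ∂μ ∂μ := by
  have hlower : Measurable fun u ↦ ∫⁻ v in Iio u, G u v ∂μ := by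
    simp_rw [← lintegral_indicator measurableSet_Iio, indicator_apply, mem_Iio]
    exact Measurable.lintegral_prod_right
      (Measurable.ite (measurableSet_lt measurable_snd measurable_fst) hG measurable_const)
  have hsplit : ∀ u, ∫⁻ v, G u v ∂μ = ∫⁻ v in Iio u, G u v ∂μ + ∫⁻ v in Ioi u, G u v ∂μ := by
    intro u
    rw [← lintegral_add_compl _ measurableSet_Iio, compl_Iio, setLIntegral_congr Ioi_ae_eq_Ici]
  have hswap : ∫⁻ u, ∫⁻ v in Ioi u, G u v ∂μ ∂μ = ∫⁻ u, ∫⁻ v in Iio u, G u v ∂μ ∂μ := by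
    simp_rw [← lintegral_indicator measurableSet_Ioi, ← lintegral_indicator measurableSet_Iio,
      indicator_apply, mem_Ioi, mem_Iio]
    rw [lintegral_lintegral_swap (Measurable.ite
      (measurableSet_lt measurable_fst measurable_snd) hG measurable_const).aemeasurable]
    simp_rw [hsymm]
  rw [lintegral_congr hsplit, lintegral_add_left hlower, hswap, two_mul]

theorem setIntegral_Ioo_comp_add_sub {a b : ℝ} (hab : a ≤ b) (f : ℝ → ℝ) :
    ∫ x in Ioo a b, f (a + b - x) = ∫ x in Ioo a b, f x := by
  simp only [← integral_Ioc_eq_integral_Ioo, ← intervalIntegral.integral_of_le hab,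
    intervalIntegral.integral_comp_sub_left, add_sub_cancel_left, add_sub_cancel_right]

theorem integral_integral_eq_toReal_lintegral_lintegral {α β : Type*} [MeasurableSpace α]
    [MeasurableSpace β] {μ : Measure α} {ν : Measure β} [SFinite ν] {f : α → β → ℝ}
    (hf : Measurable (uncurry f)) (hnonneg : ∀ᵐ x ∂μ, 0 ≤ᵐ[ν] f x)
    (hfin : ∫⁻ x, ∫⁻ y, ENNReal.ofReal (f x y) ∂ν ∂μ ≠ ∞) :
    ∫ x, ∫ y, f x y ∂ν ∂μ = (∫⁻ x, ∫⁻ y, ENNReal.ofReal (f x y) ∂ν ∂μ).toReal := by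
  have hinner : Measurable fun x ↦ ∫⁻ y, ENNReal.ofReal (f x y) ∂ν :=
    hf.ennreal_ofReal.lintegral_prod_right'
  rw [← integral_toReal hinner.aemeasurable (ae_lt_top hinner hfin)]
  refine integral_congr_ae (hnonneg.mono fun x hx ↦ ?_)
  exact integral_eq_lintegral_of_nonneg_ae hx (hf.comp measurable_prodMk_left).aestronglyMeasurable

theorem rpow_mul_sub_rpow_nonneg (p q : ℝ) {c x : ℝ} (hx : x ∈ Icc 0 c) :
    0 ≤ x ^ p * (c - x) ^ q :=
  mul_nonneg (Real.rpow_nonneg hx.1 _) (Real.rpow_nonneg (sub_nonneg.2 hx.2) _)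

theorem setIntegral_Ioo_rpow_mul_one_sub_rpow_nonneg (p q : ℝ) :
    0 ≤ ∫ x in Ioo (0 : ℝ) 1, x ^ p * (1 - x) ^ q :=
  setIntegral_nonneg measurableSet_Ioo fun _ hx ↦
    rpow_mul_sub_rpow_nonneg p q (Ioo_subset_Icc_self hx)

theorem integrableOn_rpow_mul_sub_rpow {p q c : ℝ} (hp : -1 < p) (hq : -1 < q) (hc : 0 < c) :
    IntegrableOn (fun x ↦ x ^ p * (c - x) ^ q) (Ioo 0 c) := by
  have hleft : IntervalIntegrable (fun x ↦ x ^ p * (c - x) ^ q) volume 0 (c / 2) := by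
    refine (intervalIntegral.intervalIntegrable_rpow' hp).mul_continuousOn
      (ContinuousOn.rpow_const (by fun_prop) fun x hx ↦ Or.inl ?_)
    rw [uIcc_of_le (by positivity)] at hx
    linarith [hx.2]
  have hright : IntervalIntegrable (fun x ↦ x ^ p * (c - x) ^ q) volume (c / 2) c := by
    have hsing : IntervalIntegrable (fun x ↦ (c - x) ^ q) volume (c / 2) c := by
      simpa [show c - c / 2 = c / 2 by ring] using
        ((intervalIntegral.intervalIntegrable_rpow' (a := 0) (b := c / 2) hq).comp_sub_left c).symm
    refine hsing.continuousOn_mul (ContinuousOn.rpow_const continuousOn_id fun x hx ↦ Or.inl ?_)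
    rw [uIcc_of_le (by linarith)] at hx
    exact (lt_of_lt_of_le (by positivity) hx.1).ne'
  exact ((intervalIntegrable_iff_integrableOn_Ioo_of_le hc.le).mp (hleft.trans hright))

theorem setIntegral_Ioo_rpow_mul_sub_rpow (p q : ℝ) {c : ℝ} (hc : 0 < c) :
    ∫ x in Ioo 0 c, x ^ p * (c - x) ^ q
      = c ^ (p + q + 1) * ∫ x in Ioo 0 1, x ^ p * (1 - x) ^ q := by
  simp only [← integral_Ioc_eq_integral_Ioo, ← intervalIntegral.integral_of_le hc.le,
    ← intervalIntegral.integral_of_le zero_le_one]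
  have hscale : ∀ x ∈ uIcc (0 : ℝ) 1,
      (c * x) ^ p * (c - c * x) ^ q = c ^ (p + q) * (x ^ p * (1 - x) ^ q) := by
    intro x hx
    rw [uIcc_of_le zero_le_one] at hx
    rw [show c - c * x = c * (1 - x) by ring, Real.mul_rpow hc.le hx.1,
      Real.mul_rpow hc.le (by linarith [hx.2]), Real.rpow_add hc]
    ring
  have hsub := intervalIntegral.mul_integral_comp_mul_left (a := 0) (b := 1)
    (f := fun x ↦ x ^ p * (c - x) ^ q) (c := c)
  rw [mul_zero, mul_one] at hsub
  rw [← hsub, intervalIntegral.integral_congr hscale, intervalIntegral.integral_const_mul,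
    Real.rpow_add_one hc.ne']
  ring

theorem lintegral_Ioo_ofReal_rpow_mul_sub_rpow {p q c : ℝ} (hp : -1 < p) (hq : -1 < q)
    (hc : 0 < c) :
    ∫⁻ x in Ioo 0 c, ENNReal.ofReal (x ^ p * (c - x) ^ q)
      = ENNReal.ofReal (c ^ (p + q + 1) * ∫ x in Ioo 0 1, x ^ p * (1 - x) ^ q) := by
  rw [← setIntegral_Ioo_rpow_mul_sub_rpow p q hc,
    ofReal_integral_eq_lintegral_ofReal (integrableOn_rpow_mul_sub_rpow hp hq hc)]
  exact ae_restrict_of_forall_mem measurableSet_Ioo fun x hx ↦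
    rpow_mul_sub_rpow_nonneg p q (Ioo_subset_Icc_self hx)

theorem lintegral_Ioo_lintegral_Ioo_rpow_mul_rpow_mul_abs_sub_rpow {a b T : ℝ} (ha : -1 < a)
    (hb : -1 < b) (hab : 0 < 2 * a + b + 2) (hT : 0 < T) :
    ∫⁻ u in Ioo 0 T, ∫⁻ v in Ioo 0 T, ENNReal.ofReal (u ^ a * v ^ a * |u - v| ^ b)
      = ENNReal.ofReal (2 * T ^ (2 * a + b + 2) / (2 * a + b + 2) *
          ∫ x in Ioo 0 1, x ^ a * (1 - x) ^ b) := by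
  set B := ∫ x in Ioo (0 : ℝ) 1, x ^ a * (1 - x) ^ b
  have hB : 0 ≤ B := setIntegral_Ioo_rpow_mul_one_sub_rpow_nonneg a b
  have hinner : ∀ u ∈ Ioo 0 T,
      ∫⁻ v in Iio u, ENNReal.ofReal (u ^ a * v ^ a * |u - v| ^ b) ∂volume.restrict (Ioo 0 T)
        = ENNReal.ofReal (u ^ (2 * a + b + 1) * B) := by
    intro u ⟨hu0, huT⟩
    rw [Measure.restrict_restrict measurableSet_Iio, Iio_inter_Ioo, min_eq_left huT.le]
    calc ∫⁻ v in Ioo 0 u, ENNReal.ofReal (u ^ a * v ^ a * |u - v| ^ b)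
        = ∫⁻ v in Ioo 0 u, ENNReal.ofReal (u ^ a) * ENNReal.ofReal (v ^ a * (u - v) ^ b) := by
          refine setLIntegral_congr_fun measurableSet_Ioo fun v hv ↦ ?_
          rw [abs_of_pos (sub_pos.2 hv.2), mul_assoc, ENNReal.ofReal_mul (by positivity)]
      _ = ENNReal.ofReal (u ^ (2 * a + b + 1) * B) := by
          rw [lintegral_const_mul' _ _ ENNReal.ofReal_ne_top,
            lintegral_Ioo_ofReal_rpow_mul_sub_rpow ha hb hu0, ← ENNReal.ofReal_mul (by positivity),
            ← mul_assoc, ← Real.rpow_add hu0, show a + (a + b + 1) = 2 * a + b + 1 by ring]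
  have hmeas :
      Measurable (uncurry fun u v : ℝ ↦ ENNReal.ofReal (u ^ a * v ^ a * |u - v| ^ b)) := by
    fun_prop
  have hpow : IntegrableOn (fun u : ℝ ↦ u ^ (2 * a + b + 1)) (Ioo 0 T) :=
    (intervalIntegrable_iff_integrableOn_Ioo_of_le hT.le).mp
      (intervalIntegral.intervalIntegrable_rpow' (by linarith))
  rw [lintegral_lintegral_eq_two_mul_of_symm hmeas fun u v ↦ by
      rw [abs_sub_comm, mul_comm (u ^ a)],
    setLIntegral_congr_fun measurableSet_Ioo hinner,
    ← ofReal_integral_eq_lintegral_ofReal (hpow.mul_const B)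
      (ae_restrict_of_forall_mem measurableSet_Ioo fun u hu ↦
        mul_nonneg (Real.rpow_nonneg hu.1.le _) hB),
    integral_mul_const, integral_Ioc_eq_integral_Ioo.symm, ← intervalIntegral.integral_of_le hT.le,
    integral_rpow (Or.inl (by linarith)), Real.zero_rpow (by linarith), sub_zero,
    ← ENNReal.ofReal_ofNat 2, ← ENNReal.ofReal_mul zero_le_two,
    show 2 * a + b + 1 + 1 = 2 * a + b + 2 by ring]
  congr 1
  ring

theorem setIntegral_Ioo_setIntegral_Ioo_rpow_mul_rpow_mul_abs_sub_rpow {a b T : ℝ}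
    (ha : -1 < a) (hb : -1 < b) (hab : 0 < 2 * a + b + 2) (hT : 0 < T) :
    ∫ u in Ioo 0 T, ∫ v in Ioo 0 T, u ^ a * v ^ a * |u - v| ^ b
      = 2 * T ^ (2 * a + b + 2) / (2 * a + b + 2) * ∫ x in Ioo 0 1, x ^ a * (1 - x) ^ b := by
  have hsquare := lintegral_Ioo_lintegral_Ioo_rpow_mul_rpow_mul_abs_sub_rpow ha hb hab hT
  have hnonneg : ∀ᵐ u ∂volume.restrict (Ioo 0 T),
      0 ≤ᵐ[volume.restrict (Ioo 0 T)] fun v ↦ u ^ a * v ^ a * |u - v| ^ b :=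
    ae_restrict_of_forall_mem measurableSet_Ioo fun u hu ↦
      ae_restrict_of_forall_mem measurableSet_Ioo fun v hv ↦
        mul_nonneg (mul_nonneg (Real.rpow_nonneg hu.1.le _) (Real.rpow_nonneg hv.1.le _))
          (Real.rpow_nonneg (abs_nonneg _) _)
  rw [integral_integral_eq_toReal_lintegral_lintegral (by fun_prop) hnonneg
    (hsquare ▸ ENNReal.ofReal_ne_top), hsquare, ENNReal.toReal_ofReal]
  exact mul_nonneg (div_nonneg (mul_nonneg zero_le_two (Real.rpow_nonneg hT.le _)) hab.le)
    (setIntegral_Ioo_rpow_mul_one_sub_rpow_nonneg a b)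

theorem stmt12 (H α T : ℝ) (hH : 1/2 < H) (hH1 : H < 1)
    (hα : α ∈ Set.Ioo (0:ℝ) H) (hT : 0 < T) :
    (∫ u in Set.Ioo (0:ℝ) T, ∫ v in Set.Ioo (0:ℝ) T,
      (T - u) ^ (-α) * (T - v) ^ (-α) * |v - u| ^ (2*H - 2))
    = (T ^ (2*H - 2*α) / (H - α)) *
        ∫ x in Set.Ioo (0:ℝ) 1, x ^ (1 - α - 1) * (1 - x) ^ (2*H - 1 - 1) := by
  obtain ⟨hα0, hαH⟩ := hα
  have hreflect (f : ℝ → ℝ) : ∫ x in Ioo 0 T, f (T - x) = ∫ x in Ioo 0 T, f x := by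
    simpa using setIntegral_Ioo_comp_add_sub (a := 0) hT.le f
  set g : ℝ → ℝ → ℝ := fun u v ↦ u ^ (-α) * v ^ (-α) * |u - v| ^ (2 * H - 2)
  calc _ = ∫ u in Ioo 0 T, ∫ v in Ioo 0 T, g (T - u) (T - v) := by
        simp only [g, sub_sub_sub_cancel_left]
    _ = ∫ u in Ioo 0 T, ∫ v in Ioo 0 T, g (T - u) v := by
        congr 1 with u
        exact hreflect (g (T - u))
    _ = ∫ u in Ioo 0 T, ∫ v in Ioo 0 T, g u v := hreflect fun u ↦ ∫ v in Ioo 0 T, g u v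
    _ = 2 * T ^ (2 * (H - α)) / (2 * (H - α)) *
          ∫ x in Ioo 0 1, x ^ (-α) * (1 - x) ^ (2 * H - 2) := by
        rw [setIntegral_Ioo_setIntegral_Ioo_rpow_mul_rpow_mul_abs_sub_rpow (by linarith)
          (by linarith) (by linarith) hT, show 2 * -α + (2 * H - 2) + 2 = 2 * (H - α) by ring]
    _ = _ := by
        rw [mul_div_mul_left _ _ two_ne_zero, mul_sub, show (1 : ℝ) - α - 1 = -α by ring,
          show 2 * H - 1 - 1 = 2 * H - 2 by ring]
end

section
/- Let H ∈ (1/2,1), α ≥ H, and T > 0. Then (T−t)^(2α−1) ∫₀ᵗ ∫₀ᵗ (T−u)^(−α) (T−v)^(−α) |v−u|^(2H−2) dv du → 0 as t → T⁻. -/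
open MeasureTheory Set Filter Real Topology

/-!
Write `ε = T - t`. On `v < t` we have `(T - v)^(-α) ≤ ε^(H-α) (T - v)^(-H)`. Splitting at the
midpoint of `u` and `T`, either `T - v` dominates both `(T - u)/2` and `|v - u|`, or
`|v - u| ≥ (T - u)/2 ≥ T - v`; trading a power `δ` of `T - u` in each case gives
`(T - v)^(-H) |v - u|^(2H-2) ≤ 2^δ (T - u)^(-δ) (|v - u|^q + |v - T|^q)` with `q = H + δ - 2`.
For `δ > 1 - H` we have `q > -1`, so the `v`-integral of the right-hand side is bounded uniformly
in `u`, and integrating `(T - u)^(-α-δ)` over `u < t` costs `ε^(1-α-δ)`. Altogether the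
normalized integral is `O(ε^(H-δ))`, which tends to `0` once `δ < H`.
-/

lemma intervalIntegrable_abs_sub_rpow {p : ℝ} (hp : -1 < p) (c a b : ℝ) :
    IntervalIntegrable (fun x : ℝ => |x - c| ^ p) volume a b := by
  have from_zero : ∀ d, IntervalIntegrable (fun x : ℝ => |x| ^ p) volume 0 d := by
    intro d
    rcases le_total 0 d with hd | hd
    · refine (intervalIntegral.intervalIntegrable_rpow' hp).congr_uIoo fun x hx => ?_
      rw [uIoo_of_le hd] at hx
      simp [abs_of_pos hx.1]
    · have := (intervalIntegral.intervalIntegrable_rpow' hp (a := 0) (b := -d)).comp_sub_left 0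
      simp only [sub_zero, sub_neg_eq_add, zero_add, zero_sub] at this
      refine this.congr_uIoo fun x hx => ?_
      rw [uIoo_of_ge hd] at hx
      simp [abs_of_neg hx.2]
  simpa using ((from_zero (a - c)).symm.trans (from_zero (b - c))).comp_sub_right c

lemma integral_abs_rpow {p a b : ℝ} (hp : -1 < p) (ha : a ≤ 0) (hb : 0 ≤ b) :
    ∫ x in a..b, |x| ^ p = ((-a) ^ (p + 1) + b ^ (p + 1)) / (p + 1) := by
  have hint : ∀ a b : ℝ, IntervalIntegrable (fun x : ℝ => |x| ^ p) volume a b := by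
    simpa using intervalIntegrable_abs_sub_rpow hp 0
  have left : ∫ x in a..0, |x| ^ p = ∫ x in a..0, (-x) ^ p :=
    intervalIntegral.integral_congr fun x hx => by
      rw [uIcc_of_le ha] at hx
      simp [abs_of_nonpos hx.2]
  have right : ∫ x in 0..b, |x| ^ p = ∫ x in 0..b, x ^ p :=
    intervalIntegral.integral_congr fun x hx => by
      rw [uIcc_of_le hb] at hx
      simp [abs_of_nonneg hx.1]
  rw [← intervalIntegral.integral_add_adjacent_intervals (hint a 0) (hint 0 b), left, right,
    intervalIntegral.integral_comp_neg (fun x => x ^ p), integral_rpow (Or.inl hp),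
    integral_rpow (Or.inl hp), neg_zero, zero_rpow (by linarith)]
  ring

lemma integral_abs_sub_rpow_le {p a b c R : ℝ} (hp : -1 < p) (hab : a ≤ b) (ha : -R ≤ a - c)
    (hb : b - c ≤ R) :
    ∫ x in a..b, |x - c| ^ p ≤ 2 * R ^ (p + 1) / (p + 1) := by
  rw [intervalIntegral.integral_comp_sub_right (fun x => |x| ^ p)]
  calc ∫ x in a - c..b - c, |x| ^ p ≤ ∫ x in -R..R, |x| ^ p :=
        intervalIntegral.integral_mono_interval ha (by linarith) hb
          (ae_of_all _ fun x => by positivity)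
          (by simpa using intervalIntegrable_abs_sub_rpow hp 0 _ _)
    _ = 2 * R ^ (p + 1) / (p + 1) := by
      rw [integral_abs_rpow hp (by linarith) (by linarith), neg_neg]
      ring

lemma integral_sub_rpow_neg_le {β a b c : ℝ} (hβ : 1 < β) (hab : a ≤ b) (hbc : b < c) :
    ∫ x in a..b, (c - x) ^ (-β) ≤ (c - b) ^ (1 - β) / (β - 1) := by
  rw [intervalIntegral.integral_comp_sub_left (fun x => x ^ (-β)),
    integral_rpow (Or.inr ⟨by linarith, notMem_uIcc_of_lt (by linarith) (by linarith)⟩),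
    show -β + 1 = -(β - 1) by ring, div_neg, ← neg_div, neg_sub,
    show 1 - β = -(β - 1) by ring]
  have : 0 ≤ (c - a) ^ (-(β - 1)) := rpow_nonneg (by linarith) _
  exact div_le_div_of_nonneg_right (by linarith) (by linarith)

lemma tendsto_sub_rpow_nhdsLT {r : ℝ} (hr : 0 < r) (T : ℝ) :
    Tendsto (fun t => (T - t) ^ r) (𝓝[<] T) (𝓝 0) := by
  have hcont : Continuous fun t : ℝ => (T - t) ^ r :=
    (continuous_const.sub continuous_id).rpow_const fun _ => Or.inr hr.le
  simpa [zero_rpow hr.ne'] using (hcont.tendsto T).mono_left nhdsWithin_le_nhds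

section Kernel

variable {H δ : ℝ}

lemma rpow_neg_mul_rpow_le {a b c : ℝ} (ha : 0 < a) (hb : 0 ≤ b) (hc : 0 < c) (hH : H < 1)
    (hδ : 0 ≤ δ) (hδH : δ ≤ H) (hδH' : H + δ ≤ 2 - H)
    (hcases : c ≤ a ∧ b ≤ a ∨ c ≤ b ∧ a ≤ c) :
    a ^ (-H) * b ^ (2 * H - 2) ≤ c ^ (-δ) * (b ^ (H + δ - 2) + a ^ (H + δ - 2)) := by
  rcases hb.eq_or_lt with rfl | hb
  · rw [zero_rpow (by linarith), mul_zero]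
    positivity
  rcases hcases with ⟨hca, hba⟩ | ⟨hcb, hac⟩
  · calc a ^ (-H) * b ^ (2 * H - 2) = a ^ (-δ) * a ^ (δ - H) * b ^ (2 * H - 2) := by
          rw [← rpow_add ha]
          ring_nf
      _ ≤ c ^ (-δ) * b ^ (δ - H) * b ^ (2 * H - 2) := by
          refine mul_le_mul_of_nonneg_right (mul_le_mul ?_ ?_ (by positivity) (by positivity))
            (by positivity)
          · exact rpow_le_rpow_of_nonpos hc hca (by linarith)
          · exact rpow_le_rpow_of_nonpos hb hba (by linarith)
      _ = c ^ (-δ) * b ^ (H + δ - 2) := by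
          rw [mul_assoc, ← rpow_add hb]
          ring_nf
      _ ≤ c ^ (-δ) * (b ^ (H + δ - 2) + a ^ (H + δ - 2)) := by
          gcongr
          exact le_add_of_nonneg_right (rpow_nonneg ha.le _)
  · calc a ^ (-H) * b ^ (2 * H - 2) ≤ a ^ (-H) * c ^ (2 * H - 2) := by
          refine mul_le_mul_of_nonneg_left ?_ (by positivity)
          exact rpow_le_rpow_of_nonpos hc hcb (by linarith)
      _ = a ^ (-H) * (c ^ (-δ) * c ^ (2 * H - 2 + δ)) := by
          rw [← rpow_add hc]
          ring_nf
      _ ≤ a ^ (-H) * (c ^ (-δ) * a ^ (2 * H - 2 + δ)) := by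
          refine mul_le_mul_of_nonneg_left (mul_le_mul_of_nonneg_left ?_ (by positivity))
            (by positivity)
          exact rpow_le_rpow_of_nonpos ha hac (by linarith)
      _ = c ^ (-δ) * a ^ (H + δ - 2) := by
          rw [mul_left_comm, ← rpow_add ha]
          ring_nf
      _ ≤ c ^ (-δ) * (b ^ (H + δ - 2) + a ^ (H + δ - 2)) := by
          gcongr
          exact le_add_of_nonneg_left (rpow_nonneg hb.le _)

lemma sub_rpow_neg_mul_abs_sub_rpow_le {u v T : ℝ} (hu : u < T) (hv : v < T) (hH : H < 1)
    (hδ : 0 ≤ δ) (hδH : δ ≤ H) (hδH' : H + δ ≤ 2 - H) :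
    (T - v) ^ (-H) * |v - u| ^ (2 * H - 2) ≤
      2 ^ δ * (T - u) ^ (-δ) * (|v - u| ^ (H + δ - 2) + |v - T| ^ (H + δ - 2)) := by
  have hcases : (T - u) / 2 ≤ T - v ∧ |v - u| ≤ T - v ∨
      (T - u) / 2 ≤ |v - u| ∧ T - v ≤ (T - u) / 2 := by
    rcases le_total v ((u + T) / 2) with h | h
    · exact Or.inl ⟨by linarith, abs_le.2 ⟨by linarith, by linarith⟩⟩
    · exact Or.inr ⟨le_abs.2 (Or.inl (by linarith)), by linarith⟩
  have key := rpow_neg_mul_rpow_le (sub_pos.2 hv) (abs_nonneg (v - u))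
    (by linarith : 0 < (T - u) / 2) hH hδ hδH hδH' hcases
  rw [div_rpow (by linarith) zero_le_two, rpow_neg zero_le_two, div_inv_eq_mul,
    mul_comm _ (2 ^ δ)] at key
  rwa [abs_sub_comm v T, abs_of_pos (sub_pos.2 hv)]

end Kernel

noncomputable def weightedKernel (H α T u v : ℝ) : ℝ :=
  (T - u) ^ (-α) * (T - v) ^ (-α) * |v - u| ^ (2 * H - 2)

/-- Up to the factor `H (2H - 1)`, this is `E[ξ_t²]` for
`ξ_t = ∫₀ᵗ (T - s)^(-α) dB^H_s`. -/
noncomputable def weightedKernelIntegral (H α T t : ℝ) : ℝ :=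
  ∫ u in Ioo 0 t, ∫ v in Ioo 0 t, weightedKernel H α T u v

lemma weightedKernel_nonneg (H α : ℝ) {T u v : ℝ} (hu : u < T) (hv : v < T) :
    0 ≤ weightedKernel H α T u v := by
  have := sub_pos.2 hu
  have := sub_pos.2 hv
  unfold weightedKernel
  positivity

lemma weightedKernelIntegral_nonneg (H α : ℝ) {T t : ℝ} (ht : t ≤ T) :
    0 ≤ weightedKernelIntegral H α T t :=
  setIntegral_nonneg measurableSet_Ioo fun _ hu => setIntegral_nonneg measurableSet_Ioo
    fun _ hv => weightedKernel_nonneg H α (hu.2.trans_le ht) (hv.2.trans_le ht)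

section Estimate

variable {H α δ T t : ℝ}

lemma integral_weightedKernel_le (hH1 : H < 1) (hα : H ≤ α) (hδ : 1 - H < δ) (hδH : δ ≤ H)
    (hδH' : H + δ ≤ 2 - H) (ht0 : 0 < t) (htT : t < T) {u : ℝ} (hu : u ∈ Ioo 0 t) :
    ∫ v in Ioo 0 t, weightedKernel H α T u v ≤
      (T - t) ^ (H - α) * 2 ^ δ * (4 * T ^ (H + δ - 1) / (H + δ - 1)) *
        (T - u) ^ (-(α + δ)) := by
  have hq : -1 < H + δ - 2 := by linarith
  have hTu : 0 < T - u := by linarith [hu.2]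
  set A := (T - t) ^ (H - α) * 2 ^ δ * (T - u) ^ (-(α + δ)) with hA
  have hmajor : ∀ v ∈ Ioo 0 t,
      weightedKernel H α T u v ≤ A * (|v - u| ^ (H + δ - 2) + |v - T| ^ (H + δ - 2)) := by
    intro v ⟨_, hvt⟩
    have hTv : 0 < T - v := by linarith
    calc weightedKernel H α T u v
        = (T - u) ^ (-α) * (T - v) ^ (H - α) * ((T - v) ^ (-H) * |v - u| ^ (2 * H - 2)) := by
          rw [weightedKernel, ← mul_assoc, mul_assoc _ ((T - v) ^ (H - α)), ← rpow_add hTv]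
          ring_nf
      _ ≤ (T - u) ^ (-α) * (T - t) ^ (H - α) *
          (2 ^ δ * (T - u) ^ (-δ) * (|v - u| ^ (H + δ - 2) + |v - T| ^ (H + δ - 2))) := by
          refine mul_le_mul (mul_le_mul_of_nonneg_left ?_ (by positivity))
            (sub_rpow_neg_mul_abs_sub_rpow_le (hu.2.trans htT) (hvt.trans htT) hH1
              (by linarith) hδH hδH')
            (by positivity) (by positivity)
          exact rpow_le_rpow_of_nonpos (by linarith) (by linarith) (by linarith)
      _ = A * (|v - u| ^ (H + δ - 2) + |v - T| ^ (H + δ - 2)) := by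
          rw [hA, neg_add, rpow_add hTu]
          ring
  have hint : IntegrableOn (fun v => A * (|v - u| ^ (H + δ - 2) + |v - T| ^ (H + δ - 2)))
      (Ioo 0 t) :=
    (intervalIntegrable_iff_integrableOn_Ioo_of_le ht0.le).1
      (((intervalIntegrable_abs_sub_rpow hq u 0 t).add
        (intervalIntegrable_abs_sub_rpow hq T 0 t)).const_mul A)
  calc _ ≤ ∫ v in Ioo 0 t, A * (|v - u| ^ (H + δ - 2) + |v - T| ^ (H + δ - 2)) :=
        setIntegral_mono_of_nonneg (fun v hv => weightedKernel_nonneg H α (hu.2.trans htT)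
          (hv.2.trans htT)) hmajor hint
    _ = A * ((∫ v in 0..t, |v - u| ^ (H + δ - 2)) + ∫ v in 0..t, |v - T| ^ (H + δ - 2)) := by
        rw [integral_const_mul, ← integral_Ioc_eq_integral_Ioo,
          ← intervalIntegral.integral_of_le ht0.le, intervalIntegral.integral_add
          (intervalIntegrable_abs_sub_rpow hq u 0 t) (intervalIntegrable_abs_sub_rpow hq T 0 t)]
    _ ≤ A * (2 * T ^ (H + δ - 2 + 1) / (H + δ - 2 + 1) +
          2 * T ^ (H + δ - 2 + 1) / (H + δ - 2 + 1)) := by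
        have : 0 ≤ A := by positivity
        gcongr <;>
          exact integral_abs_sub_rpow_le hq ht0.le (by linarith [hu.2]) (by linarith [hu.1])
    _ = _ := by
        rw [show H + δ - 2 + 1 = H + δ - 1 by ring]
        ring

lemma weightedKernelIntegral_le (hH1 : H < 1) (hα : H ≤ α) (hδ : 1 - H < δ) (hδH : δ ≤ H)
    (hδH' : H + δ ≤ 2 - H) (ht0 : 0 < t) (htT : t < T) :
    (T - t) ^ (2 * α - 1) * weightedKernelIntegral H α T t ≤
      2 ^ δ * (4 * T ^ (H + δ - 1) / (H + δ - 1)) / (α + δ - 1) * (T - t) ^ (H - δ) := by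
  have hε : 0 < T - t := by linarith
  have hβ : 1 < α + δ := by linarith
  set B := (T - t) ^ (H - α) * 2 ^ δ * (4 * T ^ (H + δ - 1) / (H + δ - 1)) with hB
  have hB0 : 0 ≤ B := by
    have : 0 < H + δ - 1 := by linarith
    have : 0 < T := by linarith
    positivity
  have hcont : ContinuousOn (fun u => (T - u) ^ (-(α + δ))) (uIcc 0 t) :=
    (continuousOn_const.sub continuousOn_id).rpow_const fun u hu =>
      Or.inl (by rw [uIcc_of_le ht0.le] at hu; exact (sub_pos.2 (hu.2.trans_lt htT)).ne')
  have hint : IntegrableOn (fun u => B * (T - u) ^ (-(α + δ))) (Ioo 0 t) :=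
    (intervalIntegrable_iff_integrableOn_Ioo_of_le ht0.le).1
      (hcont.intervalIntegrable.const_mul B)
  have hW : weightedKernelIntegral H α T t ≤ B * ((T - t) ^ (1 - (α + δ)) / (α + δ - 1)) :=
    calc weightedKernelIntegral H α T t ≤ ∫ u in Ioo 0 t, B * (T - u) ^ (-(α + δ)) :=
          setIntegral_mono_of_nonneg (fun u hu => setIntegral_nonneg measurableSet_Ioo
            fun v hv => weightedKernel_nonneg H α (hu.2.trans htT) (hv.2.trans htT))
            (fun u hu => integral_weightedKernel_le hH1 hα hδ hδH hδH' ht0 htT hu) hint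
      _ = B * ∫ u in 0..t, (T - u) ^ (-(α + δ)) := by
          rw [integral_const_mul, ← integral_Ioc_eq_integral_Ioo,
            ← intervalIntegral.integral_of_le ht0.le]
      _ ≤ B * ((T - t) ^ (1 - (α + δ)) / (α + δ - 1)) := by
          gcongr
          exact integral_sub_rpow_neg_le hβ ht0.le htT
  calc (T - t) ^ (2 * α - 1) * weightedKernelIntegral H α T t
      ≤ (T - t) ^ (2 * α - 1) * (B * ((T - t) ^ (1 - (α + δ)) / (α + δ - 1))) := by
        gcongr
    _ = 2 ^ δ * (4 * T ^ (H + δ - 1) / (H + δ - 1)) / (α + δ - 1) *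
          ((T - t) ^ (2 * α - 1) * (T - t) ^ (H - α) * (T - t) ^ (1 - (α + δ))) := by
        rw [hB]
        ring
    _ = _ := by
        rw [← rpow_add hε, ← rpow_add hε]
        ring_nf

end Estimate

theorem stmt13 (H α T : ℝ) (hH : 1/2 < H) (hH1 : H < 1)
    (hα : H ≤ α) (hT : 0 < T) :
    Filter.Tendsto (fun t : ℝ =>
      (T - t) ^ (2*α - 1) * ∫ u in Set.Ioo (0:ℝ) t, ∫ v in Set.Ioo (0:ℝ) t,
        (T - u) ^ (-α) * (T - v) ^ (-α) * |v - u| ^ (2*H - 2))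
      (nhdsWithin T (Set.Iio T)) (nhds 0) := by
  obtain ⟨δ, hδ, hδH, hδH'⟩ : ∃ δ, 1 - H < δ ∧ δ < H ∧ H + δ ≤ 2 - H :=
    ⟨2 * H * (1 - H), by nlinarith, by nlinarith, by nlinarith⟩
  have hlim := (tendsto_sub_rpow_nhdsLT (sub_pos.2 hδH) T).const_mul
    (2 ^ δ * (4 * T ^ (H + δ - 1) / (H + δ - 1)) / (α + δ - 1))
  rw [mul_zero] at hlim
  refine squeeze_zero' ?_ ?_ hlim
  · filter_upwards [self_mem_nhdsWithin] with t ht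
    exact mul_nonneg (rpow_nonneg (sub_nonneg.2 (le_of_lt ht)) _)
      (weightedKernelIntegral_nonneg H α (le_of_lt ht))
  · filter_upwards [Ioo_mem_nhdsLT hT] with t ht
    exact weightedKernelIntegral_le hH1 hα hδ hδH.le hδH' ht.1 ht.2
end

section
/- Let H ∈ (1/2,1), α ∈ (0, 1−H), and T > 0. Then ∫₀ᵀ∫₀ᵀ∫ᵤᵀ∫ₓᵀ u^(−α) x^(−α) |u−x|^(2H−2) v^(α−1) y^(α−1) |v−y|^(2H−2) dy dv dx du < ∞. -/
open MeasureTheory Set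
open scoped ENNReal
open Function (uncurry)

/-!
For `α ≤ 1/2` and `u ≤ v` we have `u^(-α) v^(α-1) ≤ (u v)^(-1/2)`, and likewise for `x ≤ y`. After
enlarging the inner domains to `(0, T)`, the integral is therefore at most `K ^ 2`, where `K` is the
double integral over `(0, T)²` of `k(s, t) = (s t)^(-1/2) |s - t|^(2H-2)`. For `t ≤ s`,
`k(s, t) ≤ t^(H-3/2) |s - t|^(H-3/2)`, and `H - 3/2 > -1`, so `K < ∞` by Tonelli and the local
integrability of `|r|^(H-3/2)`.
-/

theorem lintegral_lintegral_mul_lintegral_lintegral {α : Type*} [MeasurableSpace α]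
    (μ : Measure α) [SFinite μ] {f : α → α → ℝ≥0∞} (hf : Measurable (uncurry f)) :
    ∫⁻ u, ∫⁻ x, ∫⁻ v, ∫⁻ y, f u x * f v y ∂μ ∂μ ∂μ ∂μ = (∫⁻ u, ∫⁻ x, f u x ∂μ ∂μ) ^ 2 := by
  have hrow : Measurable fun v => ∫⁻ y, f v y ∂μ := hf.lintegral_prod_right'
  simp_rw [lintegral_const_mul _ hf.of_uncurry_left, lintegral_const_mul _ hrow,
    lintegral_mul_const _ hf.of_uncurry_left, lintegral_mul_const _ hrow, sq]

theorem lintegral_lintegral_add_swap {α : Type*} [MeasurableSpace α]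
    (μ : Measure α) [SFinite μ] {f : α → α → ℝ≥0∞} (hf : Measurable (uncurry f)) :
    ∫⁻ s, ∫⁻ t, (f s t + f t s) ∂μ ∂μ = 2 * ∫⁻ s, ∫⁻ t, f s t ∂μ ∂μ := by
  have hrow : Measurable fun s => ∫⁻ t, f s t ∂μ := hf.lintegral_prod_right'
  have hswap : Measurable (uncurry fun s t => f t s) := hf.comp measurable_swap
  simp_rw [lintegral_add_left hf.of_uncurry_left]
  rw [lintegral_add_left hrow, lintegral_lintegral_swap hswap.aemeasurable, two_mul]

theorem locallyIntegrable_abs_rpow {p : ℝ} (hp : -1 < p) :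
    LocallyIntegrable (fun r : ℝ => |r| ^ p) := by
  have hmeas : Measurable fun r : ℝ => |r| ^ p := by fun_prop
  refine locallyIntegrable_of_norm_le_rpow (C := 1) (α := -p) (by simp) (by simp; linarith)
    (ae_of_all _ fun r => ?_) hmeas.aestronglyMeasurable
  simp [abs_of_nonneg (Real.rpow_nonneg (abs_nonneg r) p)]

theorem setLIntegral_Ioo_abs_rpow_lt_top {p : ℝ} (hp : -1 < p) (a b : ℝ) :
    ∫⁻ r in Ioo a b, ENNReal.ofReal (|r| ^ p) < ⊤ :=
  (((locallyIntegrable_abs_rpow hp).integrableOn_isCompact isCompact_Icc).mono_set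
    Ioo_subset_Icc_self).lintegral_lt_top

theorem setLIntegral_Ioo_abs_sub_rpow_le {p T s : ℝ} (hs : s ∈ Icc 0 T) :
    ∫⁻ t in Ioo 0 T, ENNReal.ofReal (|s - t| ^ p) ≤
      ∫⁻ r in Ioo (-T) T, ENNReal.ofReal (|r| ^ p) := by
  have hsub : Ioo 0 T ⊆ (fun t => s - t) ⁻¹' Ioo (-T) T := by
    rw [preimage_const_sub_Ioo]
    exact Ioo_subset_Ioo (by linarith [hs.2]) (by linarith [hs.1])
  calc ∫⁻ t in Ioo 0 T, ENNReal.ofReal (|s - t| ^ p)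
      ≤ ∫⁻ t in (fun t => s - t) ⁻¹' Ioo (-T) T, ENNReal.ofReal (|s - t| ^ p) :=
        lintegral_mono_set hsub
    _ = ∫⁻ r in Ioo (-T) T, ENNReal.ofReal (|r| ^ p) :=
        (Measure.measurePreserving_sub_left volume s).setLIntegral_comp_preimage_emb
          (MeasurableEquiv.subLeft s).measurableEmbedding
          (fun r => ENNReal.ofReal (|r| ^ p)) _

theorem lintegral_rpow_mul_abs_sub_rpow_lt_top {p : ℝ} (hp : -1 < p) (T : ℝ) :
    ∫⁻ s in Ioo 0 T, ∫⁻ t in Ioo 0 T, ENNReal.ofReal (s ^ p * |s - t| ^ p) < ⊤ := by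
  set L := ∫⁻ r in Ioo (-T) T, ENNReal.ofReal (|r| ^ p)
  have hrow : ∀ s ∈ Ioo 0 T,
      ∫⁻ t in Ioo 0 T, ENNReal.ofReal (s ^ p * |s - t| ^ p) ≤ ENNReal.ofReal (s ^ p) * L := by
    intro s hs
    simp_rw [ENNReal.ofReal_mul (Real.rpow_nonneg hs.1.le p)]
    rw [lintegral_const_mul' _ _ ENNReal.ofReal_ne_top]
    gcongr
    exact setLIntegral_Ioo_abs_sub_rpow_le (Ioo_subset_Icc_self hs)
  have hJ : ∫⁻ s in Ioo 0 T, ENNReal.ofReal (s ^ p) < ⊤ :=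
    ((intervalIntegral.intervalIntegrable_rpow' hp).1.mono_set
      Ioo_subset_Ioc_self).lintegral_lt_top
  have hL : L < ⊤ := setLIntegral_Ioo_abs_rpow_lt_top hp _ _
  calc _ ≤ ∫⁻ s in Ioo 0 T, ENNReal.ofReal (s ^ p) * L :=
        setLIntegral_mono' measurableSet_Ioo hrow
    _ = (∫⁻ s in Ioo 0 T, ENNReal.ofReal (s ^ p)) * L := lintegral_mul_const' _ _ hL.ne
    _ < ⊤ := ENNReal.mul_lt_top hJ hL

theorem rpow_neg_mul_rpow_sub_one_le {α u v : ℝ} (hα : α ≤ 1/2) (hu : 0 < u) (huv : u ≤ v) :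
    u ^ (-α) * v ^ (α - 1) ≤ u ^ (-(1/2) : ℝ) * v ^ (-(1/2) : ℝ) := by
  have hv : 0 < v := hu.trans_le huv
  calc u ^ (-α) * v ^ (α - 1) = u ^ (-α) * (v ^ (α - 1/2) * v ^ (-(1/2) : ℝ)) := by
        rw [← Real.rpow_add hv]; ring_nf
    _ ≤ u ^ (-α) * (u ^ (α - 1/2) * v ^ (-(1/2) : ℝ)) := by
        gcongr u ^ (-α) * (?_ * _)
        exact Real.rpow_le_rpow_of_nonpos hu huv (by linarith)
    _ = u ^ (-(1/2) : ℝ) * v ^ (-(1/2) : ℝ) := by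
        rw [← mul_assoc, ← Real.rpow_add hu]; ring_nf

noncomputable def weightedFBMKernel (H s t : ℝ) : ℝ :=
  s ^ (-(1/2) : ℝ) * t ^ (-(1/2) : ℝ) * |s - t| ^ (2 * H - 2)

theorem weightedFBMKernel_nonneg (H : ℝ) {s t : ℝ} (hs : 0 ≤ s) (ht : 0 ≤ t) :
    0 ≤ weightedFBMKernel H s t := by
  unfold weightedFBMKernel
  positivity

theorem weightedFBMKernel_le_of_le {H s t : ℝ} (hH : 1/2 ≤ H) (hH1 : H < 1) (ht : 0 < t)
    (hts : t ≤ s) : weightedFBMKernel H s t ≤ t ^ (H - 3/2) * |s - t| ^ (H - 3/2) := by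
  have hs : 0 < s := ht.trans_le hts
  have hd : |s - t| ≤ s := by rw [abs_of_nonneg (by linarith)]; linarith
  have hsplit : |s - t| ^ (2 * H - 2) = |s - t| ^ (H - 1/2) * |s - t| ^ (H - 3/2) := by
    rw [← Real.rpow_add' (abs_nonneg _) (by linarith)]; ring_nf
  have hfirst : s ^ (-(1/2) : ℝ) * |s - t| ^ (H - 1/2) ≤ t ^ (H - 1) :=
    calc s ^ (-(1/2) : ℝ) * |s - t| ^ (H - 1/2) ≤ s ^ (-(1/2) : ℝ) * s ^ (H - 1/2) := by
          gcongr
      _ = s ^ (H - 1) := by rw [← Real.rpow_add hs]; ring_nf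
      _ ≤ t ^ (H - 1) := Real.rpow_le_rpow_of_nonpos ht hts (by linarith)
  calc weightedFBMKernel H s t
      = (s ^ (-(1/2) : ℝ) * |s - t| ^ (H - 1/2)) *
          (t ^ (-(1/2) : ℝ) * |s - t| ^ (H - 3/2)) := by
        rw [weightedFBMKernel, hsplit]; ring
    _ ≤ t ^ (H - 1) * (t ^ (-(1/2) : ℝ) * |s - t| ^ (H - 3/2)) := by gcongr
    _ = t ^ (H - 3/2) * |s - t| ^ (H - 3/2) := by
        rw [← mul_assoc, ← Real.rpow_add ht]; ring_nf

theorem weightedFBMKernel_comm (H s t : ℝ) :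
    weightedFBMKernel H s t = weightedFBMKernel H t s := by
  rw [weightedFBMKernel, weightedFBMKernel, abs_sub_comm]; ring

theorem weightedFBMKernel_le {H s t : ℝ} (hH : 1/2 ≤ H) (hH1 : H < 1) (hs : 0 < s)
    (ht : 0 < t) :
    weightedFBMKernel H s t ≤
      s ^ (H - 3/2) * |s - t| ^ (H - 3/2) + t ^ (H - 3/2) * |t - s| ^ (H - 3/2) := by
  rcases le_total t s with hts | hst
  · calc _ ≤ t ^ (H - 3/2) * |t - s| ^ (H - 3/2) := by
          rw [abs_sub_comm]; exact weightedFBMKernel_le_of_le hH hH1 ht hts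
      _ ≤ _ := le_add_of_nonneg_left (by positivity)
  · calc _ = weightedFBMKernel H t s := weightedFBMKernel_comm H s t
      _ ≤ s ^ (H - 3/2) * |s - t| ^ (H - 3/2) := by
          rw [abs_sub_comm]; exact weightedFBMKernel_le_of_le hH hH1 hs hst
      _ ≤ _ := le_add_of_nonneg_right (by positivity)

theorem lintegral_weightedFBMKernel_lt_top {H : ℝ} (hH : 1/2 < H) (hH1 : H < 1) (T : ℝ) :
    ∫⁻ s in Ioo 0 T, ∫⁻ t in Ioo 0 T, ENNReal.ofReal (weightedFBMKernel H s t) < ⊤ := by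
  set G : ℝ → ℝ → ℝ≥0∞ := fun s t => ENNReal.ofReal (s ^ (H - 3/2) * |s - t| ^ (H - 3/2))
  have hG : Measurable (uncurry G) := by fun_prop
  calc _ ≤ ∫⁻ s in Ioo 0 T, ∫⁻ t in Ioo 0 T, (G s t + G t s) := by
        refine setLIntegral_mono' measurableSet_Ioo fun s ⟨hs, _⟩ =>
          setLIntegral_mono' measurableSet_Ioo fun t ⟨ht, _⟩ => ?_
        rw [← ENNReal.ofReal_add (by positivity) (by positivity)]
        exact ENNReal.ofReal_le_ofReal (weightedFBMKernel_le hH.le hH1 hs ht)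
    _ = 2 * ∫⁻ s in Ioo 0 T, ∫⁻ t in Ioo 0 T, G s t := lintegral_lintegral_add_swap _ hG
    _ < ⊤ :=
        ENNReal.mul_lt_top (by simp) (lintegral_rpow_mul_abs_sub_rpow_lt_top (by linarith) T)

theorem le_weightedFBMKernel_mul_weightedFBMKernel {H α u x v y : ℝ} (hα : α ≤ 1/2)
    (hu : 0 < u) (hx : 0 < x) (huv : u ≤ v) (hxy : x ≤ y) :
    u ^ (-α) * x ^ (-α) * |u - x| ^ (2 * H - 2) * v ^ (α - 1) * y ^ (α - 1) *
        |v - y| ^ (2 * H - 2) ≤ weightedFBMKernel H u x * weightedFBMKernel H v y := by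
  have hv : 0 < v := hu.trans_le huv
  have hy : 0 < y := hx.trans_le hxy
  calc _ = (u ^ (-α) * v ^ (α - 1)) * (x ^ (-α) * y ^ (α - 1))
          * (|u - x| ^ (2 * H - 2) * |v - y| ^ (2 * H - 2)) := by ring
    _ ≤ (u ^ (-(1/2) : ℝ) * v ^ (-(1/2) : ℝ)) * (x ^ (-(1/2) : ℝ) * y ^ (-(1/2) : ℝ))
          * (|u - x| ^ (2 * H - 2) * |v - y| ^ (2 * H - 2)) := by
        gcongr ?_ * ?_ * _
        · exact rpow_neg_mul_rpow_sub_one_le hα hu huv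
        · exact rpow_neg_mul_rpow_sub_one_le hα hx hxy
    _ = weightedFBMKernel H u x * weightedFBMKernel H v y := by
        rw [weightedFBMKernel, weightedFBMKernel]; ring

theorem stmt15_general (H α T : ℝ) (hH : 1/2 < H) (hH1 : H < 1)
    (hα : α ∈ Set.Ioo (0:ℝ) (1 - H)) :
    (∫⁻ u in Set.Ioo (0:ℝ) T, ∫⁻ x in Set.Ioo (0:ℝ) T,
      ∫⁻ v in Set.Ioo u T, ∫⁻ y in Set.Ioo x T,
        ENNReal.ofReal (u ^ (-α) * x ^ (-α) * |u - x| ^ (2*H - 2) *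
          v ^ (α - 1) * y ^ (α - 1) * |v - y| ^ (2*H - 2))) < ⊤ := by
  have hα' : α ≤ 1/2 := by linarith [hα.2]
  set k : ℝ → ℝ → ℝ≥0∞ := fun s t => ENNReal.ofReal (weightedFBMKernel H s t)
  have hk : Measurable (uncurry k) := by unfold k weightedFBMKernel; fun_prop
  calc _ ≤ ∫⁻ u in Ioo 0 T, ∫⁻ x in Ioo 0 T,
        ∫⁻ v in Ioo 0 T, ∫⁻ y in Ioo 0 T, k u x * k v y := by
        refine setLIntegral_mono' measurableSet_Ioo fun u hu =>
          setLIntegral_mono' measurableSet_Ioo fun x hx => ?_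
        refine (lintegral_mono_set (Ioo_subset_Ioo_left hu.1.le)).trans'
          (setLIntegral_mono' measurableSet_Ioo fun v hv => ?_)
        refine (lintegral_mono_set (Ioo_subset_Ioo_left hx.1.le)).trans'
          (setLIntegral_mono' measurableSet_Ioo fun y hy => ?_)
        rw [← ENNReal.ofReal_mul (weightedFBMKernel_nonneg H hu.1.le hx.1.le)]
        exact ENNReal.ofReal_le_ofReal
          (le_weightedFBMKernel_mul_weightedFBMKernel hα' hu.1 hx.1 hv.1.le hy.1.le)
    _ = (∫⁻ u in Ioo 0 T, ∫⁻ x in Ioo 0 T, k u x) ^ 2 :=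
        lintegral_lintegral_mul_lintegral_lintegral _ hk
    _ < ⊤ := ENNReal.pow_lt_top (lintegral_weightedFBMKernel_lt_top hH hH1 T)

theorem stmt15 (H α T : ℝ) (hH : 1/2 < H) (hH1 : H < 1)
    (hα : α ∈ Set.Ioo (0:ℝ) (1 - H)) (hT : 0 < T) :
    (∫⁻ u in Set.Ioo (0:ℝ) T, ∫⁻ x in Set.Ioo (0:ℝ) T,
      ∫⁻ v in Set.Ioo u T, ∫⁻ y in Set.Ioo x T,
        ENNReal.ofReal (u ^ (-α) * x ^ (-α) * |u - x| ^ (2*H - 2) *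
          v ^ (α - 1) * y ^ (α - 1) * |v - y| ^ (2*H - 2))) < ⊤ :=
  stmt15_general H α T hH hH1 hα
end

section
/- Let T ∈ (0,1) and let ξ : [0,T] → ℝ be a continuous function that is γ-Hölder continuous for some γ > 0. Then (1/|log(T−t)|) ∫₀ᵗ ξ(s)²/(T−s) ds → ξ(T)² as t → T⁻. -/
/-!
Write `ξ s ^ 2 = ξ T ^ 2 + (ξ s ^ 2 - ξ T ^ 2)`. The constant part integrates against
`(T - s)⁻¹` to `ξ T ^ 2 * (log T - log (T - t)) = ξ T ^ 2 * |log (T - t)| + O(1)`. By the Hölder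
bound the remainder is `O((T - s) ^ γ)`, so after division by `T - s` it is dominated by the
integrable singularity `(T - s) ^ (γ - 1)` and contributes `O(1)`. Dividing by
`|log (T - t)| → ∞` leaves `ξ T ^ 2`.
-/

open MeasureTheory Set Filter Real Topology

lemma continuousOn_of_dist_le_mul_rpow {X Y : Type*} [PseudoMetricSpace X] [PseudoMetricSpace Y]
    {f : X → Y} {s : Set X} {C γ : ℝ} (hγ : 0 < γ)
    (hf : ∀ x ∈ s, ∀ y ∈ s, dist (f y) (f x) ≤ C * dist y x ^ γ) : ContinuousOn f s := by
  intro x hx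
  have hbound : Tendsto (fun y => C * dist y x ^ γ) (𝓝[s] x) (𝓝 0) := by
    have h : Continuous fun y => C * dist y x ^ γ :=
      ((continuous_id.dist continuous_const).rpow_const fun _ => Or.inr hγ.le).const_mul C
    simpa [zero_rpow hγ.ne'] using (h.tendsto x).mono_left nhdsWithin_le_nhds
  refine tendsto_iff_dist_tendsto_zero.2 <| squeeze_zero' ?_ ?_ hbound
  · exact Eventually.of_forall fun _ => dist_nonneg
  · filter_upwards [self_mem_nhdsWithin] with y hy using hf x hx y hy

lemma abs_sq_sub_sq_le (x y : ℝ) : |x ^ 2 - y ^ 2| ≤ |x - y| * (|x - y| + 2 * |y|) := by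
  calc |x ^ 2 - y ^ 2| = |x - y| * |(x - y) + 2 * y| := by rw [← abs_mul]; ring_nf
    _ ≤ |x - y| * (|x - y| + 2 * |y|) := by
      gcongr
      exact (abs_add_le _ _).trans_eq (by rw [abs_mul, abs_two])

lemma abs_sq_sub_sq_le_of_holder {ξ : ℝ → ℝ} {T C γ : ℝ} (hC : 0 ≤ C) (hγ : 0 < γ)
    (hHolder : ∀ s ∈ Icc 0 T, ∀ t ∈ Icc 0 T, |ξ t - ξ s| ≤ C * |t - s| ^ γ)
    {s : ℝ} (hs : s ∈ Icc 0 T) :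
    |ξ s ^ 2 - ξ T ^ 2| ≤ C * (C * T ^ γ + 2 * |ξ T|) * (T - s) ^ γ := by
  have hdiff : |ξ s - ξ T| ≤ C * (T - s) ^ γ := by
    simpa [abs_sub_comm s T, abs_of_nonneg (sub_nonneg.2 hs.2)] using
      hHolder T (right_mem_Icc.2 (hs.1.trans hs.2)) s hs
  have hsmall : C * (T - s) ^ γ ≤ C * T ^ γ := by
    gcongr
    · linarith [hs.2]
    · linarith [hs.1]
  calc |ξ s ^ 2 - ξ T ^ 2| ≤ |ξ s - ξ T| * (|ξ s - ξ T| + 2 * |ξ T|) := abs_sq_sub_sq_le _ _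
    _ ≤ C * (T - s) ^ γ * (C * T ^ γ + 2 * |ξ T|) :=
      mul_le_mul hdiff (by linarith) (by positivity) ((abs_nonneg _).trans hdiff)
    _ = C * (C * T ^ γ + 2 * |ξ T|) * (T - s) ^ γ := by ring

section SingularIntegrals

variable {a t T : ℝ}

lemma integral_Ioo_inv_sub (hat : a ≤ t) (htT : t < T) :
    ∫ s in Ioo a t, (T - s)⁻¹ = log (T - a) - log (T - t) := by
  rw [← integral_Ioc_eq_integral_Ioo, ← intervalIntegral.integral_of_le hat,
    intervalIntegral.integral_comp_sub_left (fun x => x⁻¹), integral_inv,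
    log_div (by linarith) (by linarith)]
  rw [uIcc_of_le (by linarith)]
  exact fun h => absurd h.1 (by linarith)

lemma integral_Ioo_sub_rpow_le {γ : ℝ} (hγ : 0 < γ) (hat : a ≤ t) (htT : t < T) :
    ∫ s in Ioo a t, (T - s) ^ (γ - 1) ≤ (T - a) ^ γ / γ := by
  rw [← integral_Ioc_eq_integral_Ioo, ← intervalIntegral.integral_of_le hat,
    intervalIntegral.integral_comp_sub_left (fun x => x ^ (γ - 1)),
    integral_rpow (Or.inl (by linarith)), sub_add_cancel]
  gcongr
  linarith [rpow_nonneg (show 0 ≤ T - t by linarith) γ]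

lemma abs_setIntegral_div_sub_le {g : ℝ → ℝ} {K γ : ℝ} (hK : 0 ≤ K) (hγ : 0 < γ)
    (hat : a ≤ t) (htT : t < T) (hg : ∀ s ∈ Ioo a t, |g s| ≤ K * (T - s) ^ γ) :
    |∫ s in Ioo a t, g s / (T - s)| ≤ K * ((T - a) ^ γ / γ) := by
  have hint : IntegrableOn (fun s => K * (T - s) ^ (γ - 1)) (Ioo a t) := by
    have hden : ContinuousOn (fun s => T - s) (Icc a t) := continuousOn_const.sub continuousOn_id
    refine (ContinuousOn.integrableOn_Icc ?_).mono_set Ioo_subset_Icc_self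
    exact continuousOn_const.mul <| hden.rpow_const fun s hs => Or.inl (by linarith [hs.2])
  calc |∫ s in Ioo a t, g s / (T - s)|
      ≤ ∫ s in Ioo a t, K * (T - s) ^ (γ - 1) := by
        rw [← norm_eq_abs]
        refine norm_integral_le_of_norm_le hint ((ae_restrict_iff' measurableSet_Ioo).2 ?_)
        refine Eventually.of_forall fun s hs => ?_
        have hTs : 0 < T - s := by linarith [hs.2]
        rw [norm_div, norm_of_nonneg hTs.le, rpow_sub_one hTs.ne', ← mul_div_assoc,
          div_le_div_iff_of_pos_right hTs]
        exact hg s hs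
    _ = K * ∫ s in Ioo a t, (T - s) ^ (γ - 1) := integral_const_mul _ _
    _ ≤ K * ((T - a) ^ γ / γ) := by gcongr; exact integral_Ioo_sub_rpow_le hγ hat htT

lemma abs_setIntegral_div_sub_sub_log_le {f : ℝ → ℝ} {c K γ : ℝ}
    (hf : ContinuousOn f (Icc a t)) (hK : 0 ≤ K) (hγ : 0 < γ) (hat : a ≤ t) (htT : t < T)
    (hfc : ∀ s ∈ Ioo a t, |f s - c| ≤ K * (T - s) ^ γ) :
    |(∫ s in Ioo a t, f s / (T - s)) - c * (log (T - a) - log (T - t))|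
      ≤ K * ((T - a) ^ γ / γ) := by
  have hden : ContinuousOn (fun s => T - s) (Icc a t) := continuousOn_const.sub continuousOn_id
  have hden0 : ∀ s ∈ Icc a t, T - s ≠ 0 := fun s hs => by linarith [hs.2]
  have hmain : IntegrableOn (fun s => c * (T - s)⁻¹) (Ioo a t) :=
    ((continuousOn_const.mul (hden.inv₀ hden0)).integrableOn_Icc).mono_set Ioo_subset_Icc_self
  have herr : IntegrableOn (fun s => (f s - c) / (T - s)) (Ioo a t) :=
    (((hf.sub continuousOn_const).div hden hden0).integrableOn_Icc).mono_set
      Ioo_subset_Icc_self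
  have hsplit : ∫ s in Ioo a t, f s / (T - s)
      = c * (log (T - a) - log (T - t)) + ∫ s in Ioo a t, (f s - c) / (T - s) := by
    rw [← integral_Ioo_inv_sub hat htT, ← integral_const_mul, ← integral_add hmain herr]
    refine setIntegral_congr_fun measurableSet_Ioo fun s hs => ?_
    field_simp [show T - s ≠ 0 by linarith [hs.2]]
    ring
  rw [hsplit, add_sub_cancel_left]
  exact abs_setIntegral_div_sub_le hK hγ hat htT hfc

end SingularIntegrals

lemma tendsto_inv_abs_log_mul_of_abs_add_le {F : ℝ → ℝ} {T c K : ℝ}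
    (hF : ∀ᶠ t in 𝓝[<] T, |F t + c * log (T - t)| ≤ K) :
    Tendsto (fun t => 1 / |log (T - t)| * F t) (𝓝[<] T) (𝓝 c) := by
  have hsub : Tendsto (fun t => T - t) (𝓝[<] T) (𝓝[>] 0) := by
    refine tendsto_nhdsWithin_of_tendsto_nhds_of_eventually_within _ ?_ ?_
    · have h : Tendsto (fun t => T - t) (𝓝 T) (𝓝 (T - T)) := tendsto_const_nhds.sub tendsto_id
      simpa using h.mono_left nhdsWithin_le_nhds
    · filter_upwards [self_mem_nhdsWithin] with t ht using sub_pos.2 (mem_Iio.1 ht)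
  have hlog : Tendsto (fun t => log (T - t)) (𝓝[<] T) atBot := tendsto_log_nhdsGT_zero.comp hsub
  have hrem : Tendsto (fun t => |log (T - t)|⁻¹ * (F t + c * log (T - t))) (𝓝[<] T) (𝓝 0) :=
    (tendsto_inv_atTop_zero.comp (tendsto_abs_atBot_atTop.comp hlog)).zero_mul_isBoundedUnder_le
      ⟨K, by simpa using hF⟩
  refine (by simpa using hrem.const_add c : Tendsto _ _ (𝓝 c)).congr' ?_
  filter_upwards [hlog.eventually_lt_atBot 0] with t ht
  have hne := ht.ne
  rw [abs_of_neg ht]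
  field_simp
  ring

theorem stmt17 (T γ C : ℝ) (ξ : ℝ → ℝ) (hT : T ∈ Set.Ioo (0:ℝ) 1)
    (hγ : 0 < γ) (hC : 0 < C)
    (hHolder : ∀ s ∈ Set.Icc (0:ℝ) T, ∀ t ∈ Set.Icc (0:ℝ) T,
      |ξ t - ξ s| ≤ C * |t - s| ^ γ) :
    Filter.Tendsto (fun t : ℝ =>
      (1 / |Real.log (T - t)|) * ∫ s in Set.Ioo (0:ℝ) t, (ξ s) ^ 2 / (T - s))
      (nhdsWithin T (Set.Iio T)) (nhds ((ξ T) ^ 2)) := by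
  obtain ⟨hT0, -⟩ := hT
  have hcont : ContinuousOn ξ (Icc 0 T) := continuousOn_of_dist_le_mul_rpow hγ hHolder
  set K := C * (C * T ^ γ + 2 * |ξ T|)
  refine tendsto_inv_abs_log_mul_of_abs_add_le (K := |ξ T ^ 2 * log T| + K * (T ^ γ / γ)) ?_
  filter_upwards [Ioo_mem_nhdsLT hT0] with t ht
  have herr := abs_setIntegral_div_sub_sub_log_le (f := fun s => ξ s ^ 2)
    ((hcont.mono (Icc_subset_Icc le_rfl ht.2.le)).pow 2) (by positivity) hγ ht.1.le ht.2
    fun s hs => abs_sq_sub_sq_le_of_holder hC.le hγ hHolder ⟨hs.1.le, hs.2.le.trans ht.2.le⟩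
  rw [sub_zero] at herr
  calc |(∫ s in Ioo 0 t, ξ s ^ 2 / (T - s)) + ξ T ^ 2 * log (T - t)|
      = |((∫ s in Ioo 0 t, ξ s ^ 2 / (T - s)) - ξ T ^ 2 * (log T - log (T - t)))
        + ξ T ^ 2 * log T| := by ring_nf
    _ ≤ _ := (abs_add_le _ _).trans (by linarith)
end
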